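/- arXiv:2102.01425 — 5 statements merged into one kernel-verified Lean document; each statement's English description precedes it below -/
import Mathlib

section
/- For every smooth compactly supported function u on ℝ^n, ∫ ‖∇²u + ∇u ⊗ x‖²_HS dx = ∫ |Δu|² dx - n ∫ |∇u|² dx + ∫ |∇u|² |x|² dx. -/
open MeasureTheory Real

/-- Laplacian of `u` at `x`, as the sum of second partial derivatives. -/
noncomputable def lap {n : ℕ} (u : EuclideanSpace ℝ (Fin n) → ℝ)
    (x : EuclideanSpace ℝ (Fin n)) : ℝ :=
  ∑ i : Fin n, fderiv ℝ (fun y => fderiv ℝ u y (EuclideanSpace.single i 1)) x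
    (EuclideanSpace.single i 1)
/-- Entry `(i, j)` of the Hessian matrix of `u` at `x`. -/
noncomputable def hess {n : ℕ} (u : EuclideanSpace ℝ (Fin n) → ℝ)
    (x : EuclideanSpace ℝ (Fin n)) (i j : Fin n) : ℝ :=
  fderiv ℝ (fun y => fderiv ℝ u y (EuclideanSpace.single j 1)) x (EuclideanSpace.single i 1)

/-- Partial derivative of `u` at `x` in direction `i`. -/
noncomputable def pd {n : ℕ} (u : EuclideanSpace ℝ (Fin n) → ℝ)
    (x : EuclideanSpace ℝ (Fin n)) (i : Fin n) : ℝ :=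
  fderiv ℝ u x (EuclideanSpace.single i 1)

section Aux

variable {n : ℕ}

lemma pd_contDiff {u : EuclideanSpace ℝ (Fin n) → ℝ} (hu : ContDiff ℝ (⊤ : ℕ∞) u) (i : Fin n) :
    ContDiff ℝ (⊤ : ℕ∞) (fun x => pd u x i) := by
  have h : ContDiff ℝ (⊤ : ℕ∞) (fderiv ℝ u) := hu.fderiv_right (by simp)
  exact (ContinuousLinearMap.apply ℝ ℝ (EuclideanSpace.single i 1)).contDiff.comp h

lemma pd_supp {u : EuclideanSpace ℝ (Fin n) → ℝ} (hs : HasCompactSupport u) (i : Fin n) :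
    HasCompactSupport (fun x => pd u x i) :=
  hs.fderiv_apply ℝ (EuclideanSpace.single i 1)

lemma fderiv_pd {u : EuclideanSpace ℝ (Fin n) → ℝ} (hu : ContDiff ℝ (⊤ : ℕ∞) u)
    (w v x : EuclideanSpace ℝ (Fin n)) :
    fderiv ℝ (fun y => fderiv ℝ u y w) x v = fderiv ℝ (fderiv ℝ u) x v w := by
  have hd : DifferentiableAt ℝ (fderiv ℝ u) x :=
    ((hu.fderiv_right (m := (⊤ : ℕ∞)) (by simp)).differentiable (by simp)).differentiableAt
  have : (fun y => fderiv ℝ u y w) = (ContinuousLinearMap.apply ℝ ℝ w) ∘ (fderiv ℝ u) := rfl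
  rw [this, fderiv_comp x ((ContinuousLinearMap.apply ℝ ℝ w).differentiableAt) hd]
  simp

lemma pd_symm {u : EuclideanSpace ℝ (Fin n) → ℝ} (hu : ContDiff ℝ (⊤ : ℕ∞) u)
    (x v w : EuclideanSpace ℝ (Fin n)) :
    fderiv ℝ (fun y => fderiv ℝ u y w) x v = fderiv ℝ (fun y => fderiv ℝ u y v) x w := by
  rw [fderiv_pd hu, fderiv_pd hu]
  exact (hu.contDiffAt.isSymmSndFDerivAt (by rw [minSmoothness_of_isRCLikeNormedField]; exact WithTop.coe_le_coe.mpr (le_top : (2:ℕ∞) ≤ ⊤))) v w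

lemma ibp {f g : EuclideanSpace ℝ (Fin n) → ℝ} (hf : ContDiff ℝ (⊤ : ℕ∞) f)
    (hfs : HasCompactSupport f) (hg : ContDiff ℝ (⊤ : ℕ∞) g) (v : EuclideanSpace ℝ (Fin n)) :
    ∫ x, f x * fderiv ℝ g x v = - ∫ x, fderiv ℝ f x v * g x := by
  have hf' : ContDiff ℝ (⊤ : ℕ∞) (fun x => fderiv ℝ f x v) := by
    have h : ContDiff ℝ (⊤ : ℕ∞) (fderiv ℝ f) := hf.fderiv_right (m := (⊤ : ℕ∞)) (by simp)
    exact (ContinuousLinearMap.apply ℝ ℝ v).contDiff.comp h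
  have hg' : ContDiff ℝ (⊤ : ℕ∞) (fun x => fderiv ℝ g x v) := by
    have h : ContDiff ℝ (⊤ : ℕ∞) (fderiv ℝ g) := hg.fderiv_right (m := (⊤ : ℕ∞)) (by simp)
    exact (ContinuousLinearMap.apply ℝ ℝ v).contDiff.comp h
  apply integral_mul_fderiv_eq_neg_fderiv_mul_of_integrable
  · exact ((hf'.continuous).mul hg.continuous).integrable_of_hasCompactSupport
      ((hfs.fderiv_apply ℝ v).mul_right)
  · exact (hf.continuous.mul hg'.continuous).integrable_of_hasCompactSupport hfs.mul_right
  · exact (hf.continuous.mul hg.continuous).integrable_of_hasCompactSupport hfs.mul_right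
  · exact fun x _ => hf.differentiable (by simp) x
  · exact fun x _ => hg.differentiable (by simp) x

lemma pdv_contDiff {u : EuclideanSpace ℝ (Fin n) → ℝ} (hu : ContDiff ℝ (⊤ : ℕ∞) u)
    (v : EuclideanSpace ℝ (Fin n)) : ContDiff ℝ (⊤ : ℕ∞) (fun x => fderiv ℝ u x v) :=
  (ContinuousLinearMap.apply ℝ ℝ v).contDiff.comp (hu.fderiv_right (m := (⊤ : ℕ∞)) (by simp))

lemma ibp2 {f g : EuclideanSpace ℝ (Fin n) → ℝ} (hf : ContDiff ℝ (⊤ : ℕ∞) f)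
    (hfs : HasCompactSupport f) (hg : ContDiff ℝ (⊤ : ℕ∞) g) (v w : EuclideanSpace ℝ (Fin n)) :
    ∫ x, fderiv ℝ f x v * fderiv ℝ g x w = ∫ x, fderiv ℝ f x w * fderiv ℝ g x v := by
  have h1 := ibp (pdv_contDiff hf v) (hfs.fderiv_apply ℝ v) hg w
  have h2 := ibp (pdv_contDiff hf w) (hfs.fderiv_apply ℝ w) hg v
  rw [h1, h2]
  have : (fun x => fderiv ℝ (fun y => fderiv ℝ f y v) x w * g x)
      = fun x => fderiv ℝ (fun y => fderiv ℝ f y w) x v * g x := by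
    funext x; rw [pd_symm hf x w v]
  rw [this]

lemma hess_symm {u : EuclideanSpace ℝ (Fin n) → ℝ} (hu : ContDiff ℝ (⊤ : ℕ∞) u)
    (x : EuclideanSpace ℝ (Fin n)) (i j : Fin n) : hess u x i j = hess u x j i :=
  pd_symm hu x (EuclideanSpace.single i 1) (EuclideanSpace.single j 1)

lemma hess_contDiff {u : EuclideanSpace ℝ (Fin n) → ℝ} (hu : ContDiff ℝ (⊤ : ℕ∞) u) (i j : Fin n) :
    ContDiff ℝ (⊤ : ℕ∞) (fun x => hess u x i j) :=
  pd_contDiff (pd_contDiff hu j) i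

lemma hess_supp {u : EuclideanSpace ℝ (Fin n) → ℝ} (hs : HasCompactSupport u) (i j : Fin n) :
    HasCompactSupport (fun x => hess u x i j) :=
  pd_supp (pd_supp hs j) i

lemma claimA {u : EuclideanSpace ℝ (Fin n) → ℝ} (hu : ContDiff ℝ (⊤ : ℕ∞) u)
    (hs : HasCompactSupport u) (i j : Fin n) :
    ∫ x, (hess u x i j)^2 = ∫ x, hess u x i i * hess u x j j := by
  have h := ibp2 (pd_contDiff hu j) (pd_supp hs j) (pd_contDiff hu i)
    (EuclideanSpace.single i 1) (EuclideanSpace.single j 1)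
  -- h : ∫ H i j * H j i = ∫ H j j * H i i
  have e1 : (fun x => (hess u x i j)^2)
      = fun x => fderiv ℝ (fun y => pd u y j) x (EuclideanSpace.single i 1) *
          fderiv ℝ (fun y => pd u y i) x (EuclideanSpace.single j 1) := by
    funext x
    have : hess u x j i = hess u x i j := hess_symm hu x j i
    calc (hess u x i j)^2 = hess u x i j * hess u x j i := by rw [this]; ring
    _ = _ := rfl
  have e2 : (fun x => fderiv ℝ (fun y => pd u y j) x (EuclideanSpace.single j 1) *
          fderiv ℝ (fun y => pd u y i) x (EuclideanSpace.single i 1))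
      = fun x => hess u x i i * hess u x j j := by
    funext x
    show hess u x j j * hess u x i i = hess u x i i * hess u x j j
    ring
  rw [e1, h, e2]

lemma coord_contDiff (j : Fin n) : ContDiff ℝ (⊤ : ℕ∞) (fun x : EuclideanSpace ℝ (Fin n) => x j) :=
  (EuclideanSpace.proj j : EuclideanSpace ℝ (Fin n) →L[ℝ] ℝ).contDiff

lemma coord_fderiv (j : Fin n) (x : EuclideanSpace ℝ (Fin n)) :
    fderiv ℝ (fun x : EuclideanSpace ℝ (Fin n) => x j) x (EuclideanSpace.single j 1) = 1 := by
  have : fderiv ℝ (fun x : EuclideanSpace ℝ (Fin n) => x j) x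
      = (EuclideanSpace.proj j : EuclideanSpace ℝ (Fin n) →L[ℝ] ℝ) :=
    (EuclideanSpace.proj j : EuclideanSpace ℝ (Fin n) →L[ℝ] ℝ).fderiv
  rw [this]
  simp

lemma claimB {u : EuclideanSpace ℝ (Fin n) → ℝ} (hu : ContDiff ℝ (⊤ : ℕ∞) u)
    (hs : HasCompactSupport u) (i j : Fin n) :
    ∫ x, 2 * (hess u x i j * (pd u x i * x j)) = - ∫ x, (pd u x i)^2 := by
  have hPd : Differentiable ℝ (fun x => pd u x i) := (pd_contDiff hu i).differentiable (by simp)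
  have hq : ContDiff ℝ (⊤ : ℕ∞) (fun x => pd u x i * pd u x i) :=
    (pd_contDiff hu i).mul (pd_contDiff hu i)
  have hqs : HasCompactSupport (fun x => pd u x i * pd u x i) := (pd_supp hs i).mul_right
  have h := ibp hq hqs (coord_contDiff j) (EuclideanSpace.single j 1)
  have hd : ∀ x, fderiv ℝ (fun x => pd u x i * pd u x i) x (EuclideanSpace.single j 1)
      = 2 * (hess u x i j * pd u x i) := by
    intro x
    rw [fderiv_fun_mul (hPd x) (hPd x)]
    have : fderiv ℝ (fun y => pd u y i) x (EuclideanSpace.single j 1) = hess u x i j := by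
      show hess u x j i = hess u x i j
      exact hess_symm hu x j i
    simp only [ContinuousLinearMap.add_apply, ContinuousLinearMap.smul_apply, smul_eq_mul, this]
    ring
  have e1 : (fun x => (pd u x i * pd u x i) *
        fderiv ℝ (fun x : EuclideanSpace ℝ (Fin n) => x j) x (EuclideanSpace.single j 1))
      = fun x => (pd u x i)^2 := by
    funext x; rw [coord_fderiv]; ring
  have e2 : (fun x => fderiv ℝ (fun x => pd u x i * pd u x i) x (EuclideanSpace.single j 1) * x j)
      = fun x => 2 * (hess u x i j * (pd u x i * x j)) := by
    funext x; rw [hd]; ring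
  rw [e1, e2] at h
  linarith

lemma gradsq {u : EuclideanSpace ℝ (Fin n) → ℝ} (hu : ContDiff ℝ (⊤ : ℕ∞) u)
    (x : EuclideanSpace ℝ (Fin n)) : ‖gradient u x‖^2 = ∑ i, (pd u x i)^2 := by
  have hco : ∀ i, gradient u x i = pd u x i := by
    intro i
    have hfd : HasFDerivAt u (InnerProductSpace.toDual ℝ _ (gradient u x)) x :=
      ((hu.differentiable (by simp) x).hasGradientAt).hasFDerivAt
    have : pd u x i = (InnerProductSpace.toDual ℝ _ (gradient u x)) (EuclideanSpace.single i 1) := by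
      rw [pd, hfd.fderiv]
    rw [this, InnerProductSpace.toDual_apply_apply]
    rw [EuclideanSpace.inner_single_right]
    simp
  rw [EuclideanSpace.norm_eq, Real.sq_sqrt (by positivity)]
  refine Finset.sum_congr rfl fun i _ => ?_
  rw [hco i]
  simp [sq_abs]

lemma normsq (x : EuclideanSpace ℝ (Fin n)) : ‖x‖^2 = ∑ j, (x j)^2 := by
  rw [EuclideanSpace.norm_eq, Real.sq_sqrt (by positivity)]
  refine Finset.sum_congr rfl fun i _ => ?_
  simp [sq_abs]


end Aux

theorem stmt5 (n : ℕ) (u : EuclideanSpace ℝ (Fin n) → ℝ)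
    (hu : ContDiff ℝ (⊤ : ℕ∞) u) (hsupp : HasCompactSupport u) :
    (∫ x, ∑ i : Fin n, ∑ j : Fin n, (hess u x i j + pd u x i * x j) ^ 2)
      = (∫ x, (lap u x) ^ 2) - (n : ℝ) * (∫ x, ‖gradient u x‖ ^ 2)
        + ∫ x, ‖gradient u x‖ ^ 2 * ‖x‖ ^ 2 := by
  have hcont : ∀ i j, Continuous (fun x => hess u x i j) :=
    fun i j => (hess_contDiff hu i j).continuous
  have hPc : ∀ i, Continuous (fun x => pd u x i) := fun i => (pd_contDiff hu i).continuous
  have int1 : ∀ i j : Fin n, Integrable (fun x => (hess u x i j)^2) := fun i j =>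
    ((hcont i j).pow 2).integrable_of_hasCompactSupport
      ((hess_supp hsupp i j).comp_left (g := fun t => t^2) (by simp) : HasCompactSupport (fun x => (hess u x i j)^2))
  have int2 : ∀ i j : Fin n, Integrable (fun x => 2*(hess u x i j * (pd u x i * x j))) :=
    fun i j =>
    (continuous_const.mul ((hcont i j).mul ((hPc i).mul (coord_contDiff j).continuous)))
      |>.integrable_of_hasCompactSupport ((hess_supp hsupp i j).mul_right).mul_left
  have int3 : ∀ i j : Fin n, Integrable (fun x => (pd u x i)^2 * (x j)^2) := fun i j =>
    (((hPc i).pow 2).mul ((coord_contDiff j).continuous.pow 2)).integrable_of_hasCompactSupport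
      (((pd_supp hsupp i).comp_left (g := fun t => t^2) (by simp) : HasCompactSupport (fun x => (pd u x i)^2)).mul_right)
  have intS : ∀ i j : Fin n, Integrable (fun x => (hess u x i j + pd u x i * x j)^2) :=
    fun i j =>
    (((hcont i j).add ((hPc i).mul (coord_contDiff j).continuous)).pow 2)
      |>.integrable_of_hasCompactSupport
      (((hess_supp hsupp i j).add ((pd_supp hsupp i).mul_right)).comp_left
        (g := fun t => t^2) (by simp) : HasCompactSupport (fun x => (hess u x i j + pd u x i * x j)^2))
  have intP2 : ∀ i : Fin n, Integrable (fun x => (pd u x i)^2) := fun i =>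
    ((hPc i).pow 2).integrable_of_hasCompactSupport
      ((pd_supp hsupp i).comp_left (g := fun t => t^2) (by simp) : HasCompactSupport (fun x => (pd u x i)^2))
  have intH : ∀ i j : Fin n, Integrable (fun x => hess u x i i * hess u x j j) :=
    fun i j => ((hcont i i).mul (hcont j j)).integrable_of_hasCompactSupport
      (hess_supp hsupp i i).mul_right
  -- ∫‖∇u‖² = ∑ ∫ P_i²
  have hGrad : (∫ x, ‖gradient u x‖^2) = ∑ i : Fin n, ∫ x, (pd u x i)^2 := by
    rw [← integral_finset_sum _ (fun i _ => intP2 i)]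
    exact integral_congr_ae (Filter.Eventually.of_forall fun x => gradsq hu x)
  have step1 : (∫ x, ∑ i : Fin n, ∑ j : Fin n, (hess u x i j + pd u x i * x j)^2)
      = ∑ i : Fin n, ∑ j : Fin n, ∫ x, (hess u x i j + pd u x i * x j)^2 := by
    rw [integral_finset_sum _ (fun i _ => integrable_finset_sum _ (fun j _ => intS i j))]
    exact Finset.sum_congr rfl fun i _ => integral_finset_sum _ (fun j _ => intS i j)
  have step2 : ∀ i j : Fin n, (∫ x, (hess u x i j + pd u x i * x j)^2)
      = (∫ x, (hess u x i j)^2) + ((∫ x, 2*(hess u x i j * (pd u x i * x j)))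
        + ∫ x, (pd u x i)^2 * (x j)^2) := by
    intro i j
    have e : (fun x => (hess u x i j + pd u x i * x j)^2)
        = fun x => (hess u x i j)^2 + (2*(hess u x i j * (pd u x i * x j))
            + (pd u x i)^2 * (x j)^2) := by
      funext x; ring
    have i23 : Integrable (fun x => 2 * (hess u x i j * (pd u x i * x j))
        + pd u x i ^ 2 * x j ^ 2) (volume : Measure (EuclideanSpace ℝ (Fin n))) :=
      (int2 i j).add (int3 i j)
    rw [e, integral_add (int1 i j) i23, integral_add (int2 i j) (int3 i j)]
  have hA : (∑ i : Fin n, ∑ j : Fin n, ∫ x, (hess u x i j)^2) = ∫ x, (lap u x)^2 := by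
    calc ∑ i : Fin n, ∑ j : Fin n, ∫ x, (hess u x i j)^2
        = ∑ i : Fin n, ∑ j : Fin n, ∫ x, hess u x i i * hess u x j j :=
          Finset.sum_congr rfl fun i _ => Finset.sum_congr rfl fun j _ => claimA hu hsupp i j
      _ = ∫ x, ∑ i : Fin n, ∑ j : Fin n, hess u x i i * hess u x j j := by
          rw [integral_finset_sum _ (fun i _ => integrable_finset_sum _ (fun j _ => intH i j))]
          exact Finset.sum_congr rfl fun i _ =>
            (integral_finset_sum _ (fun j _ => intH i j)).symm
      _ = ∫ x, (lap u x)^2 := by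
          refine integral_congr_ae (Filter.Eventually.of_forall fun x => ?_)
          dsimp only
          have : lap u x = ∑ i : Fin n, hess u x i i := rfl
          rw [this, pow_two, Finset.sum_mul_sum]
  have hB : (∑ i : Fin n, ∑ j : Fin n, ∫ x, 2*(hess u x i j * (pd u x i * x j)))
      = -((n : ℝ) * ∫ x, ‖gradient u x‖^2) := by
    calc ∑ i : Fin n, ∑ j : Fin n, ∫ x, 2*(hess u x i j * (pd u x i * x j))
        = ∑ i : Fin n, ∑ _j : Fin n, -∫ x, (pd u x i)^2 :=
          Finset.sum_congr rfl fun i _ => Finset.sum_congr rfl fun j _ => claimB hu hsupp i j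
      _ = ∑ i : Fin n, (n : ℝ) * -∫ x, (pd u x i)^2 := by
          simp [Finset.sum_const, Finset.card_univ, mul_comm]
      _ = -((n : ℝ) * ∑ i : Fin n, ∫ x, (pd u x i)^2) := by
          rw [Finset.mul_sum]; simp [mul_neg, Finset.sum_neg_distrib]
      _ = -((n : ℝ) * ∫ x, ‖gradient u x‖^2) := by rw [hGrad]
  have hC : (∑ i : Fin n, ∑ j : Fin n, ∫ x, (pd u x i)^2 * (x j)^2)
      = ∫ x, ‖gradient u x‖^2 * ‖x‖^2 := by
    calc ∑ i : Fin n, ∑ j : Fin n, ∫ x, (pd u x i)^2 * (x j)^2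
        = ∫ x, ∑ i : Fin n, ∑ j : Fin n, (pd u x i)^2 * (x j)^2 := by
          rw [integral_finset_sum _ (fun i _ => integrable_finset_sum _ (fun j _ => int3 i j))]
          exact Finset.sum_congr rfl fun i _ =>
            (integral_finset_sum _ (fun j _ => int3 i j)).symm
      _ = ∫ x, ‖gradient u x‖^2 * ‖x‖^2 := by
          refine integral_congr_ae (Filter.Eventually.of_forall fun x => ?_)
          dsimp only
          rw [gradsq hu x, normsq x, Finset.sum_mul_sum]
  rw [step1]
  simp only [step2, Finset.sum_add_distrib]
  rw [hA, hB, hC]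
  ring
end

section
/- Let u = v e^{-|x|²/2} with v smooth and compactly supported on ℝ^n. Then ∫ ‖∇²u + ∇u ⊗ x‖²_HS dx = ∫ ‖∇²v - x ⊗ ∇v‖²_HS e^{-|x|²} dx + 2∫ |∇v|² e^{-|x|²} dx + 2n ∫ v² e^{-|x|²} dx - 2∫ v² |x|² e^{-|x|²} dx. -/
open MeasureTheory Real

namespace Stmt6Aux

variable {n : ℕ}

local notation "𝔼" => EuclideanSpace ℝ (Fin n)

/-! ### Derivatives of the Gaussian factors -/

lemma hasFDerivAt_E (x : 𝔼) :
    HasFDerivAt (fun y : 𝔼 => Real.exp (-‖y‖ ^ 2 / 2))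
      (Real.exp (-‖x‖ ^ 2 / 2) • (-(1 : ℝ) • (innerSL ℝ x))) x := by
  have h : HasFDerivAt (fun y : 𝔼 => -‖y‖ ^ 2 / 2) (-(1 : ℝ) • (innerSL ℝ x)) x := by
    have h2 := ((hasStrictFDerivAt_norm_sq x).hasFDerivAt.neg).const_mul (1/2 : ℝ)
    rw [show (fun y : 𝔼 => -‖y‖ ^ 2 / 2) = fun y : 𝔼 => (1/2 : ℝ) * -‖y‖ ^ 2 from
      funext fun y => by ring]
    convert h2 using 1
    all_goals try rfl
    ext y
    simp [two_smul]
    ring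
  exact h.exp

lemma hasFDerivAt_W (x : 𝔼) :
    HasFDerivAt (fun y : 𝔼 => Real.exp (-‖y‖ ^ 2))
      (Real.exp (-‖x‖ ^ 2) • (-(2 : ℝ) • (innerSL ℝ x))) x := by
  have h : HasFDerivAt (fun y : 𝔼 => -‖y‖ ^ 2) (-(2 : ℝ) • (innerSL ℝ x)) x := by
    have h2 := (hasStrictFDerivAt_norm_sq x).hasFDerivAt.neg
    convert h2 using 1
    all_goals try rfl
    ext y
    simp [two_smul]
    try ring
  exact h.exp

lemma diff_E : Differentiable ℝ (fun y : 𝔼 => Real.exp (-‖y‖ ^ 2 / 2)) :=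
  fun x => (hasFDerivAt_E x).differentiableAt

lemma diff_W : Differentiable ℝ (fun y : 𝔼 => Real.exp (-‖y‖ ^ 2)) :=
  fun x => (hasFDerivAt_W x).differentiableAt

lemma cont_W : Continuous (fun y : 𝔼 => Real.exp (-‖y‖ ^ 2)) :=
  diff_W.continuous

lemma pd_E (x : 𝔼) (i : Fin n) :
    pd (fun y : 𝔼 => Real.exp (-‖y‖ ^ 2 / 2)) x i
      = -(x i) * Real.exp (-‖x‖ ^ 2 / 2) := by
  rw [pd, (hasFDerivAt_E x).fderiv]
  simp [real_inner_comm, EuclideanSpace.inner_single_right]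
  ring

lemma pd_W (x : 𝔼) (i : Fin n) :
    pd (fun y : 𝔼 => Real.exp (-‖y‖ ^ 2)) x i
      = -2 * x i * Real.exp (-‖x‖ ^ 2) := by
  rw [pd, (hasFDerivAt_W x).fderiv]
  simp [real_inner_comm, EuclideanSpace.inner_single_right]
  ring

/-! ### Product rules for `pd` -/

lemma pd_mul {f g : 𝔼 → ℝ} {x : 𝔼} (hf : DifferentiableAt ℝ f x)
    (hg : DifferentiableAt ℝ g x) (i : Fin n) :
    pd (fun y => f y * g y) x i = pd f x i * g x + f x * pd g x i := by
  unfold pd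
  rw [fderiv_fun_mul hf hg]
  simp [smul_eq_mul]
  ring

lemma pd_sub {f g : 𝔼 → ℝ} {x : 𝔼} (hf : DifferentiableAt ℝ f x)
    (hg : DifferentiableAt ℝ g x) (i : Fin n) :
    pd (fun y => f y - g y) x i = pd f x i - pd g x i := by
  unfold pd
  rw [fderiv_fun_sub hf hg]
  simp

lemma diff_coord (j : Fin n) : Differentiable ℝ (fun y : 𝔼 => y j) :=
  (EuclideanSpace.proj (𝕜 := ℝ) j).differentiable

lemma pd_coord (x : 𝔼) (j i : Fin n) :
    pd (fun y : 𝔼 => y j) x i = if j = i then 1 else 0 := by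
  have h : pd (fun y : 𝔼 => y j) x i
      = (EuclideanSpace.proj (𝕜 := ℝ) j) (EuclideanSpace.single i 1) := by
    rw [pd, show (fun y : 𝔼 => y j) = ⇑(EuclideanSpace.proj (𝕜 := ℝ) j) from rfl,
      (EuclideanSpace.proj (𝕜 := ℝ) j).fderiv]
  rw [h]
  simp [EuclideanSpace.single_apply]

lemma pd_mul_E {f : 𝔼 → ℝ} {x : 𝔼} (hf : DifferentiableAt ℝ f x) (i : Fin n) :
    pd (fun y => f y * Real.exp (-‖y‖ ^ 2 / 2)) x i
      = (pd f x i - x i * f x) * Real.exp (-‖x‖ ^ 2 / 2) := by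
  rw [pd_mul hf (diff_E x), pd_E]
  ring

/-! ### Smoothness of first and second partials of `v` -/

lemma contDiff_pd {v : 𝔼 → ℝ} (hv : ContDiff ℝ (⊤ : ℕ∞) v) (j : Fin n) :
    ContDiff ℝ (⊤ : ℕ∞) (fun y : 𝔼 => pd v y j) :=
  (hv.fderiv_right (by simp)).clm_apply contDiff_const

lemma contDiff_hess {v : 𝔼 → ℝ} (hv : ContDiff ℝ (⊤ : ℕ∞) v) (i j : Fin n) :
    ContDiff ℝ (⊤ : ℕ∞) (fun y : 𝔼 => hess v y i j) :=
  ((contDiff_pd hv j).fderiv_right (by simp)).clm_apply contDiff_const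

lemma hcs_pd {v : 𝔼 → ℝ} (hs : HasCompactSupport v) (j : Fin n) :
    HasCompactSupport (fun y : 𝔼 => pd v y j) :=
  hs.fderiv_apply (𝕜 := ℝ) (EuclideanSpace.single j 1)

lemma hcs_hess {v : 𝔼 → ℝ} (hs : HasCompactSupport v) (i j : Fin n) :
    HasCompactSupport (fun y : 𝔼 => hess v y i j) :=
  (hcs_pd hs j).fderiv_apply (𝕜 := ℝ) (EuclideanSpace.single i 1)

/-! ### The pointwise entry identity -/

lemma entry {v : 𝔼 → ℝ} (hv : ContDiff ℝ (⊤ : ℕ∞) v) (x : 𝔼) (i j : Fin n) :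
    hess (fun y => v y * Real.exp (-‖y‖ ^ 2 / 2)) x i j
      + pd (fun y => v y * Real.exp (-‖y‖ ^ 2 / 2)) x i * x j
    = (hess v x i j - x i * pd v x j - (if i = j then v x else 0))
        * Real.exp (-‖x‖ ^ 2 / 2) := by
  have dv : Differentiable ℝ v := hv.differentiable (by simp)
  have dpd : ∀ k, Differentiable ℝ (fun y : 𝔼 => pd v y k) :=
    fun k => (contDiff_pd hv k).differentiable (by simp)
  have hpdu : ∀ k, (fun y : 𝔼 => pd (fun z => v z * Real.exp (-‖z‖ ^ 2 / 2)) y k)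
      = fun y => (pd v y k - y k * v y) * Real.exp (-‖y‖ ^ 2 / 2) :=
    fun k => funext fun y => pd_mul_E (dv y) k
  have h1 : hess (fun y => v y * Real.exp (-‖y‖ ^ 2 / 2)) x i j
      = pd (fun y => (pd v y j - y j * v y) * Real.exp (-‖y‖ ^ 2 / 2)) x i := by
    have h0 : hess (fun y => v y * Real.exp (-‖y‖ ^ 2 / 2)) x i j
        = pd (fun y => pd (fun z => v z * Real.exp (-‖z‖ ^ 2 / 2)) y j) x i := rfl
    rw [h0, hpdu j]
  have dg : DifferentiableAt ℝ (fun y : 𝔼 => pd v y j - y j * v y) x :=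
    ((dpd j).sub ((diff_coord j).mul dv)) x
  have h2 : pd (fun y : 𝔼 => pd v y j - y j * v y) x i
      = hess v x i j - ((if j = i then 1 else 0) * v x + x j * pd v x i) := by
    rw [pd_sub (g := fun y : 𝔼 => y j * v y) ((dpd j) x) (((diff_coord j).mul dv) x),
      pd_mul ((diff_coord j) x) (dv x), pd_coord]
    rfl
  rw [h1, pd_mul_E dg i, h2]
  have h3 : pd (fun y => v y * Real.exp (-‖y‖ ^ 2 / 2)) x i
      = (pd v x i - x i * v x) * Real.exp (-‖x‖ ^ 2 / 2) := pd_mul_E (dv x) i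
  rw [h3]
  by_cases hij : i = j
  · subst hij; simp; ring
  · rw [if_neg hij, if_neg (fun h => hij h.symm)]; ring

/-! ### Pointwise sum-of-squares identity -/

lemma sumsq {v : 𝔼 → ℝ} (hv : ContDiff ℝ (⊤ : ℕ∞) v) (x : 𝔼) :
    ∑ i : Fin n, ∑ j : Fin n,
        (hess (fun y => v y * Real.exp (-‖y‖ ^ 2 / 2)) x i j
          + pd (fun y => v y * Real.exp (-‖y‖ ^ 2 / 2)) x i * x j) ^ 2
    = (∑ i : Fin n, ∑ j : Fin n, (hess v x i j - x i * pd v x j) ^ 2)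
          * Real.exp (-‖x‖ ^ 2)
      + ∑ i : Fin n,
          (-2 * (v x * hess v x i i * Real.exp (-‖x‖ ^ 2))
            + 2 * (x i * v x * pd v x i * Real.exp (-‖x‖ ^ 2))
            + v x * v x * Real.exp (-‖x‖ ^ 2)) := by
  have hW : Real.exp (-‖x‖ ^ 2 / 2) * Real.exp (-‖x‖ ^ 2 / 2) = Real.exp (-‖x‖ ^ 2) := by
    rw [← Real.exp_add]; ring_nf
  have key : ∀ i j : Fin n,
      (hess (fun y => v y * Real.exp (-‖y‖ ^ 2 / 2)) x i j
        + pd (fun y => v y * Real.exp (-‖y‖ ^ 2 / 2)) x i * x j) ^ 2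
      = (hess v x i j - x i * pd v x j) ^ 2 * Real.exp (-‖x‖ ^ 2)
        + (if i = j then
            (-2 * (v x * hess v x i i * Real.exp (-‖x‖ ^ 2))
              + 2 * (x i * v x * pd v x i * Real.exp (-‖x‖ ^ 2))
              + v x * v x * Real.exp (-‖x‖ ^ 2)) else 0) := by
    intro i j
    rw [entry hv x i j]
    by_cases hij : i = j
    · subst hij
      rw [if_pos rfl, if_pos rfl, ← hW]
      ring
    · rw [if_neg hij, if_neg hij, ← hW]
      ring
  simp_rw [key, Finset.sum_add_distrib, Finset.sum_ite_eq, Finset.mem_univ, if_true,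
    ← Finset.sum_mul]
  rw [Finset.sum_add_distrib, Finset.sum_add_distrib, Finset.sum_const, Finset.sum_const,
    Finset.card_univ, Fintype.card_fin]
  simp only [nsmul_eq_mul]
  ring

/-! ### Zero integral of a partial derivative -/

lemma integral_pd_eq_zero {f : 𝔼 → ℝ} (hd : Differentiable ℝ f)
    (hc : HasCompactSupport f) (hf : Continuous f) (w : 𝔼)
    (hi : Integrable (fun x => fderiv ℝ f x w)) :
    ∫ x : 𝔼, fderiv ℝ f x w = 0 := by
  have h := integral_mul_fderiv_eq_neg_fderiv_mul_of_integrable (μ := volume)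
    (f := f) (g := fun _ => (1 : ℝ)) (v := w)
    (by simpa using hi)
    (by simp [fderiv_fun_const])
    (by simpa using hf.integrable_of_hasCompactSupport hc)
    (fun x _ => hd x) (fun x _ => differentiableAt_const (1 : ℝ))
  simp [fderiv_fun_const] at h
  linarith

/-! ### Supports -/

lemma tsupport_pd_subset {v : 𝔼 → ℝ} (j : Fin n) :
    tsupport (fun y : 𝔼 => pd v y j) ⊆ tsupport v := by
  refine closure_minimal (fun x hx => ?_) (isClosed_tsupport v)
  by_contra hxv
  refine hx ?_
  show pd v x j = 0
  rw [pd, fderiv_of_notMem_tsupport (𝕜 := ℝ) hxv]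
  simp

lemma tsupport_hess_subset {v : 𝔼 → ℝ} (i j : Fin n) :
    tsupport (fun y : 𝔼 => hess v y i j) ⊆ tsupport v :=
  Set.Subset.trans (tsupport_pd_subset (v := fun y : 𝔼 => pd v y j) i) (tsupport_pd_subset j)

lemma hcs_of_zero {v f : 𝔼 → ℝ} (hs : HasCompactSupport v)
    (h : ∀ x, x ∉ tsupport v → f x = 0) : HasCompactSupport f :=
  HasCompactSupport.intro' hs (isClosed_tsupport v) h

lemma integrable_cc {f : 𝔼 → ℝ} (hf : Continuous f) (h : HasCompactSupport f) :
    Integrable f :=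
  hf.integrable_of_hasCompactSupport h

/-! ### Gradient -/

lemma grad_sq (v : 𝔼 → ℝ) (x : 𝔼) :
    ‖gradient v x‖ ^ 2 = ∑ i : Fin n, pd v x i * pd v x i := by
  have h : ∀ i, gradient v x i = pd v x i := by
    intro i
    have h1 : (inner ℝ (EuclideanSpace.single i (1 : ℝ)) (gradient v x) : ℝ)
        = gradient v x i := by
      rw [EuclideanSpace.inner_single_left]
      simp
    rw [← h1, real_inner_comm,
      show gradient v x = (InnerProductSpace.toDual ℝ 𝔼).symm (fderiv ℝ v x) from rfl,
      InnerProductSpace.toDual_symm_apply]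
    rfl
  rw [EuclideanSpace.norm_eq, Real.sq_sqrt (by positivity)]
  refine Finset.sum_congr rfl fun i _ => ?_
  rw [h i, Real.norm_eq_abs, sq_abs, sq]

/-! ### Integration by parts identities -/

lemma ibp1 {v : 𝔼 → ℝ} (hv : ContDiff ℝ (⊤ : ℕ∞) v) (hs : HasCompactSupport v) (i : Fin n) :
    ∫ x : 𝔼, v x * hess v x i i * Real.exp (-‖x‖ ^ 2)
      = 2 * (∫ x : 𝔼, x i * v x * pd v x i * Real.exp (-‖x‖ ^ 2))
        - ∫ x : 𝔼, pd v x i * pd v x i * Real.exp (-‖x‖ ^ 2) := by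
  have dv : Differentiable ℝ v := hv.differentiable (by simp)
  have dpd : Differentiable ℝ (fun y : 𝔼 => pd v y i) :=
    (contDiff_pd hv i).differentiable (by simp)
  have z1 : ∀ x : 𝔼, x ∉ tsupport v → v x = 0 :=
    fun x hx => image_eq_zero_of_notMem_tsupport hx
  have z2 : ∀ (x : 𝔼) (k : Fin n), x ∉ tsupport v → pd v x k = 0 := by
    intro x k hx
    have h : x ∉ tsupport (fun y : 𝔼 => pd v y k) := fun h => hx (tsupport_pd_subset k h)
    exact image_eq_zero_of_notMem_tsupport (f := fun y : 𝔼 => pd v y k) h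
  set f : 𝔼 → ℝ := fun y => v y * pd v y i * Real.exp (-‖y‖ ^ 2) with hfdef
  have hd : Differentiable ℝ f := (dv.mul dpd).mul diff_W
  have hc : HasCompactSupport f :=
    hcs_of_zero hs (fun x hx => by simp [hfdef, z1 x hx])
  have hcont : Continuous f :=
    (hv.continuous.mul (contDiff_pd hv i).continuous).mul cont_W
  have i1 : Integrable (fun x : 𝔼 => pd v x i * pd v x i * Real.exp (-‖x‖ ^ 2)) :=
    integrable_cc
      (((contDiff_pd hv i).continuous.mul (contDiff_pd hv i).continuous).mul cont_W)
      (hcs_of_zero hs (fun x hx => by simp [z2 x i hx]))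
  have i2 : Integrable (fun x : 𝔼 => v x * hess v x i i * Real.exp (-‖x‖ ^ 2)) :=
    integrable_cc
      ((hv.continuous.mul (contDiff_hess hv i i).continuous).mul cont_W)
      (hcs_of_zero hs (fun x hx => by simp [z1 x hx]))
  have i3 : Integrable (fun x : 𝔼 => x i * v x * pd v x i * Real.exp (-‖x‖ ^ 2)) :=
    integrable_cc
      ((((diff_coord i).continuous.mul hv.continuous).mul
        (contDiff_pd hv i).continuous).mul cont_W)
      (hcs_of_zero hs (fun x hx => by simp [z1 x hx]))
  have hpt : ∀ x : 𝔼, fderiv ℝ f x (EuclideanSpace.single i 1)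
      = pd v x i * pd v x i * Real.exp (-‖x‖ ^ 2)
        + v x * hess v x i i * Real.exp (-‖x‖ ^ 2)
        + (-2) * (x i * v x * pd v x i * Real.exp (-‖x‖ ^ 2)) := by
    intro x
    have h0 : fderiv ℝ f x (EuclideanSpace.single i 1) = pd f x i := rfl
    rw [h0, hfdef]
    rw [pd_mul (f := fun y : 𝔼 => v y * pd v y i)
      (g := fun y : 𝔼 => Real.exp (-‖y‖ ^ 2)) ((dv x).mul (dpd x)) (diff_W x),
      pd_mul (dv x) (dpd x), pd_W]
    have h1 : pd (fun y : 𝔼 => pd v y i) x i = hess v x i i := rfl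
    rw [h1]
    ring
  have hzero : ∫ x : 𝔼, fderiv ℝ f x (EuclideanSpace.single i 1) = 0 := by
    refine integral_pd_eq_zero hd hc hcont _ ?_
    rw [show (fun x : 𝔼 => fderiv ℝ f x (EuclideanSpace.single i 1))
      = fun x : 𝔼 => pd v x i * pd v x i * Real.exp (-‖x‖ ^ 2)
        + v x * hess v x i i * Real.exp (-‖x‖ ^ 2)
        + (-2) * (x i * v x * pd v x i * Real.exp (-‖x‖ ^ 2)) from funext hpt]
    exact (i1.add i2).add (i3.const_mul (-2))
  rw [show (fun x : 𝔼 => fderiv ℝ f x (EuclideanSpace.single i 1))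
      = fun x : 𝔼 => pd v x i * pd v x i * Real.exp (-‖x‖ ^ 2)
        + v x * hess v x i i * Real.exp (-‖x‖ ^ 2)
        + (-2) * (x i * v x * pd v x i * Real.exp (-‖x‖ ^ 2)) from funext hpt] at hzero
  have i3' : Integrable (fun x : 𝔼 =>
      (-2 : ℝ) * (x i * v x * pd v x i * Real.exp (-‖x‖ ^ 2))) volume := i3.const_mul (-2)
  have i12 : Integrable (fun x : 𝔼 => pd v x i * pd v x i * Real.exp (-‖x‖ ^ 2)
      + v x * hess v x i i * Real.exp (-‖x‖ ^ 2)) volume := i1.add i2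
  rw [integral_add i12 i3', integral_add i1 i2, integral_const_mul] at hzero
  linear_combination hzero

lemma ibp2 {v : 𝔼 → ℝ} (hv : ContDiff ℝ (⊤ : ℕ∞) v) (hs : HasCompactSupport v) (i : Fin n) :
    ∫ x : 𝔼, x i * v x * pd v x i * Real.exp (-‖x‖ ^ 2)
      = (∫ x : 𝔼, x i * x i * (v x * v x) * Real.exp (-‖x‖ ^ 2))
        - (∫ x : 𝔼, v x * v x * Real.exp (-‖x‖ ^ 2)) / 2 := by
  have dv : Differentiable ℝ v := hv.differentiable (by simp)
  have z1 : ∀ x : 𝔼, x ∉ tsupport v → v x = 0 :=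
    fun x hx => image_eq_zero_of_notMem_tsupport hx
  set f : 𝔼 → ℝ := fun y => y i * (v y * v y) * Real.exp (-‖y‖ ^ 2) with hfdef
  have hd : Differentiable ℝ f := ((diff_coord i).mul (dv.mul dv)).mul diff_W
  have hc : HasCompactSupport f :=
    hcs_of_zero hs (fun x hx => by simp [hfdef, z1 x hx])
  have hcont : Continuous f :=
    (((diff_coord i).continuous.mul (hv.continuous.mul hv.continuous)).mul cont_W)
  have i1 : Integrable (fun x : 𝔼 => v x * v x * Real.exp (-‖x‖ ^ 2)) :=
    integrable_cc ((hv.continuous.mul hv.continuous).mul cont_W)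
      (hcs_of_zero hs (fun x hx => by simp [z1 x hx]))
  have i2 : Integrable (fun x : 𝔼 => x i * v x * pd v x i * Real.exp (-‖x‖ ^ 2)) :=
    integrable_cc
      ((((diff_coord i).continuous.mul hv.continuous).mul
        (contDiff_pd hv i).continuous).mul cont_W)
      (hcs_of_zero hs (fun x hx => by simp [z1 x hx]))
  have i3 : Integrable (fun x : 𝔼 => x i * x i * (v x * v x) * Real.exp (-‖x‖ ^ 2)) :=
    integrable_cc
      ((((diff_coord i).continuous.mul (diff_coord i).continuous).mul
        (hv.continuous.mul hv.continuous)).mul cont_W)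
      (hcs_of_zero hs (fun x hx => by simp [z1 x hx]))
  have hpt : ∀ x : 𝔼, fderiv ℝ f x (EuclideanSpace.single i 1)
      = v x * v x * Real.exp (-‖x‖ ^ 2)
        + 2 * (x i * v x * pd v x i * Real.exp (-‖x‖ ^ 2))
        + (-2) * (x i * x i * (v x * v x) * Real.exp (-‖x‖ ^ 2)) := by
    intro x
    have h0 : fderiv ℝ f x (EuclideanSpace.single i 1) = pd f x i := rfl
    rw [h0, hfdef]
    rw [pd_mul (f := fun y : 𝔼 => y i * (v y * v y))
      (g := fun y : 𝔼 => Real.exp (-‖y‖ ^ 2))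
      (((diff_coord i) x).mul ((dv x).mul (dv x))) (diff_W x),
      pd_mul (f := fun y : 𝔼 => y i) (g := fun y : 𝔼 => v y * v y)
      ((diff_coord i) x) ((dv x).mul (dv x)),
      pd_mul (dv x) (dv x), pd_W, pd_coord]
    norm_num
    ring
  have hzero : ∫ x : 𝔼, fderiv ℝ f x (EuclideanSpace.single i 1) = 0 := by
    refine integral_pd_eq_zero hd hc hcont _ ?_
    rw [show (fun x : 𝔼 => fderiv ℝ f x (EuclideanSpace.single i 1))
      = fun x : 𝔼 => v x * v x * Real.exp (-‖x‖ ^ 2)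
        + 2 * (x i * v x * pd v x i * Real.exp (-‖x‖ ^ 2))
        + (-2) * (x i * x i * (v x * v x) * Real.exp (-‖x‖ ^ 2)) from funext hpt]
    exact (i1.add (i2.const_mul 2)).add (i3.const_mul (-2))
  rw [show (fun x : 𝔼 => fderiv ℝ f x (EuclideanSpace.single i 1))
      = fun x : 𝔼 => v x * v x * Real.exp (-‖x‖ ^ 2)
        + 2 * (x i * v x * pd v x i * Real.exp (-‖x‖ ^ 2))
        + (-2) * (x i * x i * (v x * v x) * Real.exp (-‖x‖ ^ 2)) from funext hpt] at hzero
  have i2' : Integrable (fun x : 𝔼 =>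
      (2 : ℝ) * (x i * v x * pd v x i * Real.exp (-‖x‖ ^ 2))) volume := i2.const_mul 2
  have i3' : Integrable (fun x : 𝔼 =>
      (-2 : ℝ) * (x i * x i * (v x * v x) * Real.exp (-‖x‖ ^ 2))) volume := i3.const_mul (-2)
  have i12 : Integrable (fun x : 𝔼 => v x * v x * Real.exp (-‖x‖ ^ 2)
      + 2 * (x i * v x * pd v x i * Real.exp (-‖x‖ ^ 2))) volume := i1.add i2'
  rw [integral_add i12 i3', integral_add i1 i2', integral_const_mul, integral_const_mul] at hzero
  linear_combination (1/2 : ℝ) * hzero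

end Stmt6Aux

open Stmt6Aux in
theorem stmt6 (n : ℕ) (v : EuclideanSpace ℝ (Fin n) → ℝ)
    (hv : ContDiff ℝ (⊤ : ℕ∞) v) (hsupp : HasCompactSupport v) :
    (∫ x, ∑ i : Fin n, ∑ j : Fin n,
        (hess (fun y => v y * Real.exp (-‖y‖ ^ 2 / 2)) x i j
          + pd (fun y => v y * Real.exp (-‖y‖ ^ 2 / 2)) x i * x j) ^ 2)
      = (∫ x, (∑ i : Fin n, ∑ j : Fin n, (hess v x i j - x i * pd v x j) ^ 2)
            * Real.exp (-‖x‖ ^ 2))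
        + 2 * (∫ x, ‖gradient v x‖ ^ 2 * Real.exp (-‖x‖ ^ 2))
        + 2 * (n : ℝ) * (∫ x, (v x) ^ 2 * Real.exp (-‖x‖ ^ 2))
        - 2 * ∫ x, (v x) ^ 2 * ‖x‖ ^ 2 * Real.exp (-‖x‖ ^ 2) := by
  classical
  have z1 : ∀ x : EuclideanSpace ℝ (Fin n), x ∉ tsupport v → v x = 0 :=
    fun x hx => image_eq_zero_of_notMem_tsupport hx
  have z2 : ∀ (x : EuclideanSpace ℝ (Fin n)) (k : Fin n),
      x ∉ tsupport v → pd v x k = 0 := by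
    intro x k hx
    have h : x ∉ tsupport (fun y : EuclideanSpace ℝ (Fin n) => pd v y k) :=
      fun h => hx (tsupport_pd_subset k h)
    exact image_eq_zero_of_notMem_tsupport
      (f := fun y : EuclideanSpace ℝ (Fin n) => pd v y k) h
  have z3 : ∀ (x : EuclideanSpace ℝ (Fin n)) (k l : Fin n),
      x ∉ tsupport v → hess v x k l = 0 := by
    intro x k l hx
    have h : x ∉ tsupport (fun y : EuclideanSpace ℝ (Fin n) => hess v y k l) :=
      fun h => hx (tsupport_hess_subset k l h)
    exact image_eq_zero_of_notMem_tsupport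
      (f := fun y : EuclideanSpace ℝ (Fin n) => hess v y k l) h
  have cv := hv.continuous
  have cpd : ∀ k, Continuous fun x : EuclideanSpace ℝ (Fin n) => pd v x k :=
    fun k => (contDiff_pd hv k).continuous
  have chess : ∀ k l, Continuous fun x : EuclideanSpace ℝ (Fin n) => hess v x k l :=
    fun k l => (contDiff_hess hv k l).continuous
  have ccoord : ∀ k, Continuous fun x : EuclideanSpace ℝ (Fin n) => x k :=
    fun k => (diff_coord k).continuous
  -- integrability of the various pieces
  have iA : Integrable (fun x : EuclideanSpace ℝ (Fin n) =>
      (∑ i : Fin n, ∑ j : Fin n, (hess v x i j - x i * pd v x j) ^ 2)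
        * Real.exp (-‖x‖ ^ 2)) volume := by
    refine integrable_cc ?_ ?_
    · exact (continuous_finset_sum _ fun i _ => continuous_finset_sum _ fun j _ =>
        ((chess i j).sub ((ccoord i).mul (cpd j))).pow 2).mul cont_W
    · exact hcs_of_zero hsupp fun x hx => by
        simp only [Finset.sum_congr rfl (fun (i : Fin n) _ => Finset.sum_congr rfl
          (fun (j : Fin n) _ => by rw [z2 x j hx, z3 x i j hx] :
            ∀ j ∈ Finset.univ, (hess v x i j - x i * pd v x j) ^ 2
              = ((0 : ℝ) - x i * 0) ^ 2))]
        simp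
  have iC : ∀ i, Integrable (fun x : EuclideanSpace ℝ (Fin n) =>
      v x * hess v x i i * Real.exp (-‖x‖ ^ 2)) volume := fun i =>
    integrable_cc ((cv.mul (chess i i)).mul cont_W)
      (hcs_of_zero hsupp fun x hx => by simp [z1 x hx])
  have iD : ∀ i, Integrable (fun x : EuclideanSpace ℝ (Fin n) =>
      x i * v x * pd v x i * Real.exp (-‖x‖ ^ 2)) volume := fun i =>
    integrable_cc ((((ccoord i).mul cv).mul (cpd i)).mul cont_W)
      (hcs_of_zero hsupp fun x hx => by simp [z1 x hx])
  have iV : Integrable (fun x : EuclideanSpace ℝ (Fin n) =>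
      v x * v x * Real.exp (-‖x‖ ^ 2)) volume :=
    integrable_cc ((cv.mul cv).mul cont_W)
      (hcs_of_zero hsupp fun x hx => by simp [z1 x hx])
  have iG : ∀ i, Integrable (fun x : EuclideanSpace ℝ (Fin n) =>
      pd v x i * pd v x i * Real.exp (-‖x‖ ^ 2)) volume := fun i =>
    integrable_cc (((cpd i).mul (cpd i)).mul cont_W)
      (hcs_of_zero hsupp fun x hx => by simp [z2 x i hx])
  have iX : ∀ i, Integrable (fun x : EuclideanSpace ℝ (Fin n) =>
      x i * x i * (v x * v x) * Real.exp (-‖x‖ ^ 2)) volume := fun i =>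
    integrable_cc ((((ccoord i).mul (ccoord i)).mul (cv.mul cv)).mul cont_W)
      (hcs_of_zero hsupp fun x hx => by simp [z1 x hx])
  have iF : ∀ i, Integrable (fun x : EuclideanSpace ℝ (Fin n) =>
      -2 * (v x * hess v x i i * Real.exp (-‖x‖ ^ 2))
        + 2 * (x i * v x * pd v x i * Real.exp (-‖x‖ ^ 2))
        + v x * v x * Real.exp (-‖x‖ ^ 2)) volume := by
    intro i
    have h1 : Integrable (fun x : EuclideanSpace ℝ (Fin n) =>
        -2 * (v x * hess v x i i * Real.exp (-‖x‖ ^ 2))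
          + 2 * (x i * v x * pd v x i * Real.exp (-‖x‖ ^ 2))) volume :=
      ((iC i).const_mul (-2)).add ((iD i).const_mul 2)
    exact h1.add iV
  have iS : Integrable (fun x : EuclideanSpace ℝ (Fin n) =>
      ∑ i : Fin n, (-2 * (v x * hess v x i i * Real.exp (-‖x‖ ^ 2))
        + 2 * (x i * v x * pd v x i * Real.exp (-‖x‖ ^ 2))
        + v x * v x * Real.exp (-‖x‖ ^ 2))) volume :=
    integrable_finset_sum _ fun i _ => iF i
  -- rewrite the left-hand side
  have hL : (∫ x, ∑ i : Fin n, ∑ j : Fin n,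
        (hess (fun y => v y * Real.exp (-‖y‖ ^ 2 / 2)) x i j
          + pd (fun y => v y * Real.exp (-‖y‖ ^ 2 / 2)) x i * x j) ^ 2)
      = (∫ x, (∑ i : Fin n, ∑ j : Fin n, (hess v x i j - x i * pd v x j) ^ 2)
            * Real.exp (-‖x‖ ^ 2))
        + ∑ i : Fin n, ∫ x : EuclideanSpace ℝ (Fin n),
            (-2 * (v x * hess v x i i * Real.exp (-‖x‖ ^ 2))
              + 2 * (x i * v x * pd v x i * Real.exp (-‖x‖ ^ 2))
              + v x * v x * Real.exp (-‖x‖ ^ 2)) := by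
    rw [show (fun x : EuclideanSpace ℝ (Fin n) => ∑ i : Fin n, ∑ j : Fin n,
        (hess (fun y => v y * Real.exp (-‖y‖ ^ 2 / 2)) x i j
          + pd (fun y => v y * Real.exp (-‖y‖ ^ 2 / 2)) x i * x j) ^ 2)
      = fun x : EuclideanSpace ℝ (Fin n) =>
          (∑ i : Fin n, ∑ j : Fin n, (hess v x i j - x i * pd v x j) ^ 2)
            * Real.exp (-‖x‖ ^ 2)
          + ∑ i : Fin n, (-2 * (v x * hess v x i i * Real.exp (-‖x‖ ^ 2))
              + 2 * (x i * v x * pd v x i * Real.exp (-‖x‖ ^ 2))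
              + v x * v x * Real.exp (-‖x‖ ^ 2)) from funext fun x => sumsq hv x]
    rw [integral_add iA iS, integral_finset_sum _ fun i _ => iF i]
  rw [hL]
  -- rewrite the right-hand side pieces
  have hGrad : (∫ x, ‖gradient v x‖ ^ 2 * Real.exp (-‖x‖ ^ 2))
      = ∑ i : Fin n, ∫ x : EuclideanSpace ℝ (Fin n),
          pd v x i * pd v x i * Real.exp (-‖x‖ ^ 2) := by
    rw [show (fun x : EuclideanSpace ℝ (Fin n) => ‖gradient v x‖ ^ 2 * Real.exp (-‖x‖ ^ 2))
      = fun x : EuclideanSpace ℝ (Fin n) =>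
          ∑ i : Fin n, pd v x i * pd v x i * Real.exp (-‖x‖ ^ 2) from
        funext fun x => by rw [grad_sq, Finset.sum_mul]]
    exact integral_finset_sum _ fun i _ => iG i
  have hVsq : (∫ x, (v x) ^ 2 * Real.exp (-‖x‖ ^ 2))
      = ∫ x : EuclideanSpace ℝ (Fin n), v x * v x * Real.exp (-‖x‖ ^ 2) := by
    congr 1
    funext x
    ring
  have hXX : (∫ x, (v x) ^ 2 * ‖x‖ ^ 2 * Real.exp (-‖x‖ ^ 2))
      = ∑ i : Fin n, ∫ x : EuclideanSpace ℝ (Fin n),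
          x i * x i * (v x * v x) * Real.exp (-‖x‖ ^ 2) := by
    rw [show (fun x : EuclideanSpace ℝ (Fin n) =>
        (v x) ^ 2 * ‖x‖ ^ 2 * Real.exp (-‖x‖ ^ 2))
      = fun x : EuclideanSpace ℝ (Fin n) =>
          ∑ i : Fin n, x i * x i * (v x * v x) * Real.exp (-‖x‖ ^ 2) from
        funext fun x => ?_]
    · exact integral_finset_sum _ fun i _ => iX i
    · have hn : ‖x‖ ^ 2 = ∑ i : Fin n, x i * x i := by
        rw [EuclideanSpace.norm_eq, Real.sq_sqrt (by positivity)]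
        exact Finset.sum_congr rfl fun i _ => by rw [Real.norm_eq_abs, sq_abs, sq]
      rw [hn, Finset.mul_sum, Finset.sum_mul]
      exact Finset.sum_congr rfl fun i _ => by ring
  rw [hGrad, hVsq, hXX]
  -- use the integration-by-parts identities
  have per : ∀ i : Fin n,
      (∫ x : EuclideanSpace ℝ (Fin n),
        (-2 * (v x * hess v x i i * Real.exp (-‖x‖ ^ 2))
          + 2 * (x i * v x * pd v x i * Real.exp (-‖x‖ ^ 2))
          + v x * v x * Real.exp (-‖x‖ ^ 2)))
      = 2 * (∫ x : EuclideanSpace ℝ (Fin n),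
            pd v x i * pd v x i * Real.exp (-‖x‖ ^ 2))
        + 2 * (∫ x : EuclideanSpace ℝ (Fin n), v x * v x * Real.exp (-‖x‖ ^ 2))
        - 2 * ∫ x : EuclideanSpace ℝ (Fin n),
            x i * x i * (v x * v x) * Real.exp (-‖x‖ ^ 2) := by
    intro i
    have h1 : Integrable (fun x : EuclideanSpace ℝ (Fin n) =>
        -2 * (v x * hess v x i i * Real.exp (-‖x‖ ^ 2))
          + 2 * (x i * v x * pd v x i * Real.exp (-‖x‖ ^ 2))) volume :=
      ((iC i).const_mul (-2)).add ((iD i).const_mul 2)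
    rw [integral_add h1 iV, integral_add ((iC i).const_mul (-2)) ((iD i).const_mul 2),
      integral_const_mul, integral_const_mul, ibp1 hv hsupp i, ibp2 hv hsupp i]
    ring
  rw [Finset.sum_congr rfl fun i _ => per i]
  rw [Finset.sum_sub_distrib, Finset.sum_add_distrib, Finset.sum_const,
    ← Finset.mul_sum, ← Finset.mul_sum, Finset.card_univ, Fintype.card_fin, nsmul_eq_mul]
  ring
end

section
/- For every v ∈ C₀^∞(ℝ^n), ∫ ‖∇²v - x ⊗ ∇v‖²_HS e^{-|x|²} dx = ∫ ‖∇²v‖²_HS e^{-|x|²} dx + n ∫ |∇v|² e^{-|x|²} dx - ∫ |x|² |∇v|² e^{-|x|²} dx. -/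
open MeasureTheory Real

namespace Stmt8Aux

variable {n : ℕ}

lemma norm_sq_eq (x : EuclideanSpace ℝ (Fin n)) : ‖x‖ ^ 2 = ∑ i, x i ^ 2 := by
  rw [EuclideanSpace.norm_eq, Real.sq_sqrt (by positivity)]
  simp [sq_abs]

lemma contW : Continuous fun x : EuclideanSpace ℝ (Fin n) => Real.exp (-‖x‖ ^ 2) :=
  Real.continuous_exp.comp ((continuous_norm.pow 2).neg)

lemma integral_fderiv_zero (g : EuclideanSpace ℝ (Fin n) → ℝ)
    (hg : ContDiff ℝ 1 g) (hgs : HasCompactSupport g) (u : EuclideanSpace ℝ (Fin n)) :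
    (∫ x, fderiv ℝ g x u) = 0 := by
  have hc : Continuous fun x => fderiv ℝ g x u :=
    ((hg.fderiv_right (m := 0) (by norm_num)).continuous.clm_apply continuous_const)
  have h := integral_mul_fderiv_eq_neg_fderiv_mul_of_integrable
    (μ := (volume : Measure (EuclideanSpace ℝ (Fin n))))
    (f := fun _ => (1:ℝ)) (g := g) (v := u)
    (by simpa [fderiv_fun_const] using
      (integrable_zero _ ℝ (volume : Measure (EuclideanSpace ℝ (Fin n)))))
    (by simpa [one_mul] using hc.integrable_of_hasCompactSupport (hgs.fderiv_apply ℝ u))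
    (by simpa [one_mul] using hg.continuous.integrable_of_hasCompactSupport hgs)
    (fun _ _ => differentiableAt_const 1) (fun _ _ => (hg.differentiable one_ne_zero).differentiableAt)
  simpa [fderiv_fun_const] using h

variable (v : EuclideanSpace ℝ (Fin n) → ℝ)

section

variable (hv : ContDiff ℝ (⊤ : ℕ∞) v) (hsupp : HasCompactSupport v)
include hv

lemma contDiffPD (j : Fin n) : ContDiff ℝ (⊤ : ℕ∞) fun x => pd v x j :=
  (hv.fderiv_right (m := (⊤ : ℕ∞)) (by simp)).clm_apply contDiff_const

lemma contPD (j : Fin n) : Continuous fun x => pd v x j :=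
  (contDiffPD v hv j).continuous

lemma contH (i j : Fin n) : Continuous fun x => hess v x i j :=
  (((contDiffPD v hv j).fderiv_right (m := (⊤ : ℕ∞)) (by simp)).clm_apply contDiff_const).continuous

include hsupp

omit hv in
lemma csPD (j : Fin n) : HasCompactSupport fun x => pd v x j :=
  hsupp.fderiv_apply ℝ (EuclideanSpace.single j 1)

omit hv in
lemma csH (i j : Fin n) : HasCompactSupport fun x => hess v x i j :=
  (csPD v hsupp j).fderiv_apply ℝ (EuclideanSpace.single i 1)

omit hv hsupp in
lemma integrable_mul_w {f : EuclideanSpace ℝ (Fin n) → ℝ} (hf : Continuous f)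
    (hsf : HasCompactSupport f) :
    Integrable (fun x => f x * Real.exp (-‖x‖ ^ 2)) :=
  (hf.mul contW).integrable_of_hasCompactSupport hsf.mul_right


omit hv hsupp in
lemma csSum {f : Fin n → EuclideanSpace ℝ (Fin n) → ℝ}
    (hs : ∀ j, HasCompactSupport (f j)) : HasCompactSupport fun x => ∑ j, f j x := by
  classical
  have H : ∀ s : Finset (Fin n), HasCompactSupport fun x => ∑ j ∈ s, f j x := by
    intro s
    induction s using Finset.induction with
    | empty =>
        exact HasCompactSupport.intro isCompact_empty (by simp)
    | insert _ _ hne ih =>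
        simp only [Finset.sum_insert hne]
        exact (hs _).add ih
  exact H Finset.univ

omit hv hsupp in
lemma integral_sum_mul_w (f : Fin n → EuclideanSpace ℝ (Fin n) → ℝ)
    (hc : ∀ j, Continuous (f j)) (hs : ∀ j, HasCompactSupport (f j)) :
    (∫ x, (∑ j, f j x) * Real.exp (-‖x‖ ^ 2))
      = ∑ j, ∫ x, f j x * Real.exp (-‖x‖ ^ 2) := by
  have hInt : ∀ j, Integrable (fun x => f j x * Real.exp (-‖x‖ ^ 2)) :=
    fun j => integrable_mul_w (hc j) (hs j)
  rw [show (fun x : EuclideanSpace ℝ (Fin n) => (∑ j, f j x) * Real.exp (-‖x‖ ^ 2))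
      = fun x => ∑ j, f j x * Real.exp (-‖x‖ ^ 2) from funext fun x => Finset.sum_mul ..]
  exact integral_finset_sum _ fun j _ => hInt j

omit hv hsupp in
lemma integral_dsum_mul_w (f : Fin n → Fin n → EuclideanSpace ℝ (Fin n) → ℝ)
    (hc : ∀ i j, Continuous (f i j)) (hs : ∀ i j, HasCompactSupport (f i j)) :
    (∫ x, (∑ i, ∑ j, f i j x) * Real.exp (-‖x‖ ^ 2))
      = ∑ i, ∑ j, ∫ x, f i j x * Real.exp (-‖x‖ ^ 2) := by
  rw [integral_sum_mul_w (fun i x => ∑ j, f i j x)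
    (fun i => continuous_finset_sum _ fun j _ => hc i j)
    (fun i => csSum fun j => hs i j)]
  exact Finset.sum_congr rfl fun i _ => integral_sum_mul_w (f i) (hc i) (hs i)

/-- The pointwise derivative identity used for integration by parts. -/
lemma fderiv_G (i j : Fin n) (x : EuclideanSpace ℝ (Fin n)) :
    fderiv ℝ (fun y => y i * pd v y j ^ 2 * Real.exp (-‖y‖ ^ 2)) x (EuclideanSpace.single i 1)
      = (pd v x j ^ 2 + 2 * (x i * pd v x j * hess v x i j)
          - 2 * (x i ^ 2 * pd v x j ^ 2)) * Real.exp (-‖x‖ ^ 2) := by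
  have hp : HasFDerivAt (fun y => pd v y j) (fderiv ℝ (fun y => pd v y j) x) x :=
    ((contDiffPD v hv j).differentiable (by simp)).differentiableAt.hasFDerivAt
  have hpe : fderiv ℝ (fun y => pd v y j) x (EuclideanSpace.single i 1) = hess v x i j := rfl
  have hA : HasFDerivAt (fun y : EuclideanSpace ℝ (Fin n) => y i)
      (EuclideanSpace.proj i : EuclideanSpace ℝ (Fin n) →L[ℝ] ℝ) x := by
    simpa using (EuclideanSpace.proj (𝕜 := ℝ) (ι := Fin n) i).hasFDerivAt (x := x)
  have hW := ((hasStrictFDerivAt_norm_sq x).hasFDerivAt.fun_neg).exp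
  have hB : HasFDerivAt (fun y => pd v y j ^ 2)
      ((2 * pd v x j) • fderiv ℝ (fun y => pd v y j) x) x := by
    simpa [pow_two, two_mul, add_smul] using hp.fun_mul hp
  have hG := (hA.fun_mul hB).fun_mul hW
  rw [hG.fderiv]
  simp [hpe, EuclideanSpace.inner_single_right, EuclideanSpace.single_apply, real_inner_comm]
  ring

/-- The integration-by-parts identity for a single pair of indices. -/
lemma step (i j : Fin n) :
    (∫ x : EuclideanSpace ℝ (Fin n), pd v x j ^ 2 * Real.exp (-‖x‖ ^ 2))
      = 2 * (∫ x : EuclideanSpace ℝ (Fin n), (x i ^ 2 * pd v x j ^ 2) * Real.exp (-‖x‖ ^ 2))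
        - 2 * ∫ x : EuclideanSpace ℝ (Fin n),
            (x i * pd v x j * hess v x i j) * Real.exp (-‖x‖ ^ 2) := by
  have cX : Continuous fun x : EuclideanSpace ℝ (Fin n) => x i := PiLp.continuous_apply (p := 2) (β := fun _ => ℝ) i
  have cPD := contPD v hv j
  have cH := contH v hv i j
  have sPD := csPD v hsupp j
  -- compact support facts
  have sPD2 : HasCompactSupport fun x => pd v x j ^ 2 := by
    exact sPD.comp_left (g := fun t : ℝ => t ^ 2) (by simp)
  have hGc : ContDiff ℝ 1 fun y : EuclideanSpace ℝ (Fin n) =>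
      y i * pd v y j ^ 2 * Real.exp (-‖y‖ ^ 2) := by
    have c1 : ContDiff ℝ 1 fun y : EuclideanSpace ℝ (Fin n) => y i :=
      (EuclideanSpace.proj (𝕜 := ℝ) (ι := Fin n) i).contDiff
    have c2 : ContDiff ℝ 1 fun y => pd v y j := (contDiffPD v hv j).of_le (by simp)
    have c3 : ContDiff ℝ 1 fun y : EuclideanSpace ℝ (Fin n) => Real.exp (-‖y‖ ^ 2) :=
      (Real.contDiff_exp.of_le le_top).comp ((contDiff_norm_sq ℝ).neg)
    exact (c1.mul (c2.pow 2)).mul c3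
  have hGs : HasCompactSupport fun y : EuclideanSpace ℝ (Fin n) =>
      y i * pd v y j ^ 2 * Real.exp (-‖y‖ ^ 2) :=
    (sPD2.mul_left (f := fun y : EuclideanSpace ℝ (Fin n) => y i)).mul_right
  have h0 := integral_fderiv_zero _ hGc hGs (EuclideanSpace.single i 1)
  simp only [fderiv_G v hv hsupp i j] at h0
  -- integrability of the three pieces
  have I1 : Integrable fun x : EuclideanSpace ℝ (Fin n) =>
      pd v x j ^ 2 * Real.exp (-‖x‖ ^ 2) :=
    integrable_mul_w (cPD.pow 2) sPD2
  have I2 : Integrable fun x : EuclideanSpace ℝ (Fin n) =>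
      (x i * pd v x j * hess v x i j) * Real.exp (-‖x‖ ^ 2) :=
    integrable_mul_w ((cX.mul cPD).mul cH)
      ((sPD.mul_left (f := fun x : EuclideanSpace ℝ (Fin n) => x i)).mul_right)
  have I3 : Integrable fun x : EuclideanSpace ℝ (Fin n) =>
      (x i ^ 2 * pd v x j ^ 2) * Real.exp (-‖x‖ ^ 2) :=
    integrable_mul_w ((cX.pow 2).mul (cPD.pow 2))
      (sPD2.mul_left (f := fun x : EuclideanSpace ℝ (Fin n) => x i ^ 2))
  have hsplit : (∫ x : EuclideanSpace ℝ (Fin n),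
      (pd v x j ^ 2 + 2 * (x i * pd v x j * hess v x i j)
        - 2 * (x i ^ 2 * pd v x j ^ 2)) * Real.exp (-‖x‖ ^ 2))
      = (∫ x : EuclideanSpace ℝ (Fin n), pd v x j ^ 2 * Real.exp (-‖x‖ ^ 2))
        + 2 * (∫ x : EuclideanSpace ℝ (Fin n),
            (x i * pd v x j * hess v x i j) * Real.exp (-‖x‖ ^ 2))
        - 2 * ∫ x : EuclideanSpace ℝ (Fin n),
            (x i ^ 2 * pd v x j ^ 2) * Real.exp (-‖x‖ ^ 2) := by
    rw [show (fun x : EuclideanSpace ℝ (Fin n) =>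
        (pd v x j ^ 2 + 2 * (x i * pd v x j * hess v x i j)
          - 2 * (x i ^ 2 * pd v x j ^ 2)) * Real.exp (-‖x‖ ^ 2))
      = fun x : EuclideanSpace ℝ (Fin n) =>
          pd v x j ^ 2 * Real.exp (-‖x‖ ^ 2)
          + 2 * ((x i * pd v x j * hess v x i j) * Real.exp (-‖x‖ ^ 2))
          - 2 * ((x i ^ 2 * pd v x j ^ 2) * Real.exp (-‖x‖ ^ 2)) from funext fun x => by ring]
    rw [integral_sub (by exact (I1.add (I2.const_mul 2))) (I3.const_mul 2),
      integral_add I1 (I2.const_mul 2), integral_const_mul, integral_const_mul]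
  rw [hsplit] at h0
  linarith

end

end Stmt8Aux

theorem stmt8 (n : ℕ) (v : EuclideanSpace ℝ (Fin n) → ℝ)
    (hv : ContDiff ℝ (⊤ : ℕ∞) v) (hsupp : HasCompactSupport v) :
    (∫ x, (∑ i : Fin n, ∑ j : Fin n, (hess v x i j - x i * pd v x j) ^ 2)
        * Real.exp (-‖x‖ ^ 2))
      = (∫ x, (∑ i : Fin n, ∑ j : Fin n, (hess v x i j) ^ 2) * Real.exp (-‖x‖ ^ 2))
        + (n : ℝ) * (∫ x, ‖gradient v x‖ ^ 2 * Real.exp (-‖x‖ ^ 2))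
        - ∫ x, ‖x‖ ^ 2 * ‖gradient v x‖ ^ 2 * Real.exp (-‖x‖ ^ 2) := by
  classical
  have cX : ∀ i : Fin n, Continuous fun x : EuclideanSpace ℝ (Fin n) => x i :=
    fun i => PiLp.continuous_apply (p := 2) (β := fun _ => ℝ) i
  have cPD := fun j => Stmt8Aux.contPD v hv j
  have cH := fun i j => Stmt8Aux.contH v hv i j
  have sPD := fun j => Stmt8Aux.csPD v hsupp j
  have sH := fun i j => Stmt8Aux.csH v hsupp i j
  have sPD2 : ∀ j, HasCompactSupport fun x : EuclideanSpace ℝ (Fin n) => pd v x j ^ 2 :=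
    fun j => (sPD j).comp_left (g := fun t : ℝ => t ^ 2) (by simp)
  -- gradient coordinates
  have hgrad : ∀ x : EuclideanSpace ℝ (Fin n), ‖gradient v x‖ ^ 2 = ∑ j, pd v x j ^ 2 := by
    intro x
    have hcoord : ∀ j : Fin n, gradient v x j = pd v x j := by
      intro j
      have h1 : (inner ℝ (gradient v x) (EuclideanSpace.single j (1:ℝ)) : ℝ) = pd v x j :=
        InnerProductSpace.toDual_symm_apply
      simpa only [EuclideanSpace.inner_single_right, one_mul, conj_trivial] using h1
    rw [Stmt8Aux.norm_sq_eq]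
    exact Finset.sum_congr rfl fun j _ => by rw [hcoord j]
  simp only [hgrad]
  -- expand each integral into elementary pieces
  have E1 : (∫ x : EuclideanSpace ℝ (Fin n),
      (∑ i, ∑ j, (hess v x i j - x i * pd v x j) ^ 2) * Real.exp (-‖x‖ ^ 2))
      = ∑ i, ∑ j, ∫ x : EuclideanSpace ℝ (Fin n),
          (hess v x i j - x i * pd v x j) ^ 2 * Real.exp (-‖x‖ ^ 2) :=
    Stmt8Aux.integral_dsum_mul_w _
      (fun i j => ((cH i j).sub ((cX i).mul (cPD j))).pow 2)
      (fun i j => ((sH i j).comp₂_left ((sPD j).mul_left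
        (f := fun x : EuclideanSpace ℝ (Fin n) => x i)) (sub_zero 0)).comp_left
          (g := fun t : ℝ => t ^ 2) (by simp))
  have E2 : (∫ x : EuclideanSpace ℝ (Fin n),
      (∑ i, ∑ j, hess v x i j ^ 2) * Real.exp (-‖x‖ ^ 2))
      = ∑ i, ∑ j, ∫ x : EuclideanSpace ℝ (Fin n), hess v x i j ^ 2 * Real.exp (-‖x‖ ^ 2) :=
    Stmt8Aux.integral_dsum_mul_w _
      (fun i j => (cH i j).pow 2)
      (fun i j => (sH i j).comp_left (g := fun t : ℝ => t ^ 2) (by simp))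
  have E3 : (∫ x : EuclideanSpace ℝ (Fin n),
      (∑ j, pd v x j ^ 2) * Real.exp (-‖x‖ ^ 2))
      = ∑ j, ∫ x : EuclideanSpace ℝ (Fin n), pd v x j ^ 2 * Real.exp (-‖x‖ ^ 2) :=
    Stmt8Aux.integral_sum_mul_w _ (fun j => (cPD j).pow 2) sPD2
  have E4 : (∫ x : EuclideanSpace ℝ (Fin n),
      ‖x‖ ^ 2 * (∑ j, pd v x j ^ 2) * Real.exp (-‖x‖ ^ 2))
      = ∑ i, ∑ j, ∫ x : EuclideanSpace ℝ (Fin n),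
          (x i ^ 2 * pd v x j ^ 2) * Real.exp (-‖x‖ ^ 2) := by
    rw [show (fun x : EuclideanSpace ℝ (Fin n) =>
        ‖x‖ ^ 2 * (∑ j, pd v x j ^ 2) * Real.exp (-‖x‖ ^ 2))
        = fun x : EuclideanSpace ℝ (Fin n) =>
          (∑ i, ∑ j, x i ^ 2 * pd v x j ^ 2) * Real.exp (-‖x‖ ^ 2) from funext fun x => by
      rw [Stmt8Aux.norm_sq_eq x, Finset.sum_mul_sum]]
    exact Stmt8Aux.integral_dsum_mul_w _
      (fun i j => ((cX i).pow 2).mul ((cPD j).pow 2))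
      (fun i j => (sPD2 j).mul_left (f := fun x : EuclideanSpace ℝ (Fin n) => x i ^ 2))
  rw [E1, E2, E3, E4]
  -- expand the square inside each elementary integral
  have E5 : ∀ i j : Fin n, (∫ x : EuclideanSpace ℝ (Fin n),
      (hess v x i j - x i * pd v x j) ^ 2 * Real.exp (-‖x‖ ^ 2))
      = (∫ x : EuclideanSpace ℝ (Fin n), hess v x i j ^ 2 * Real.exp (-‖x‖ ^ 2))
        - 2 * (∫ x : EuclideanSpace ℝ (Fin n),
            (x i * pd v x j * hess v x i j) * Real.exp (-‖x‖ ^ 2))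
        + ∫ x : EuclideanSpace ℝ (Fin n),
            (x i ^ 2 * pd v x j ^ 2) * Real.exp (-‖x‖ ^ 2) := by
    intro i j
    have I1 : Integrable fun x : EuclideanSpace ℝ (Fin n) =>
        hess v x i j ^ 2 * Real.exp (-‖x‖ ^ 2) :=
      Stmt8Aux.integrable_mul_w ((cH i j).pow 2)
        ((sH i j).comp_left (g := fun t : ℝ => t ^ 2) (by simp))
    have I2 : Integrable fun x : EuclideanSpace ℝ (Fin n) =>
        (x i * pd v x j * hess v x i j) * Real.exp (-‖x‖ ^ 2) :=
      Stmt8Aux.integrable_mul_w (((cX i).mul (cPD j)).mul (cH i j))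
        (((sPD j).mul_left (f := fun x : EuclideanSpace ℝ (Fin n) => x i)).mul_right)
    have I3 : Integrable fun x : EuclideanSpace ℝ (Fin n) =>
        (x i ^ 2 * pd v x j ^ 2) * Real.exp (-‖x‖ ^ 2) :=
      Stmt8Aux.integrable_mul_w (((cX i).pow 2).mul ((cPD j).pow 2))
        ((sPD2 j).mul_left (f := fun x : EuclideanSpace ℝ (Fin n) => x i ^ 2))
    rw [show (fun x : EuclideanSpace ℝ (Fin n) =>
        (hess v x i j - x i * pd v x j) ^ 2 * Real.exp (-‖x‖ ^ 2))
        = fun x : EuclideanSpace ℝ (Fin n) =>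
          hess v x i j ^ 2 * Real.exp (-‖x‖ ^ 2)
          - 2 * ((x i * pd v x j * hess v x i j) * Real.exp (-‖x‖ ^ 2))
          + (x i ^ 2 * pd v x j ^ 2) * Real.exp (-‖x‖ ^ 2) from funext fun x => by ring]
    rw [integral_add (by exact I1.sub (I2.const_mul 2)) I3, integral_sub I1 (I2.const_mul 2),
      integral_const_mul]
  simp only [E5]
  -- the integration by parts identity, summed over i
  have hn : ∀ j : Fin n, ((n : ℝ) * ∫ x : EuclideanSpace ℝ (Fin n),
      pd v x j ^ 2 * Real.exp (-‖x‖ ^ 2))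
      = ∑ i : Fin n, (2 * (∫ x : EuclideanSpace ℝ (Fin n),
          (x i ^ 2 * pd v x j ^ 2) * Real.exp (-‖x‖ ^ 2))
        - 2 * ∫ x : EuclideanSpace ℝ (Fin n),
            (x i * pd v x j * hess v x i j) * Real.exp (-‖x‖ ^ 2)) := by
    intro j
    rw [show ((n : ℝ) * ∫ x : EuclideanSpace ℝ (Fin n),
        pd v x j ^ 2 * Real.exp (-‖x‖ ^ 2))
        = ∑ _i : Fin n, ∫ x : EuclideanSpace ℝ (Fin n),
            pd v x j ^ 2 * Real.exp (-‖x‖ ^ 2) by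
      rw [Finset.sum_const, Finset.card_univ, Fintype.card_fin, nsmul_eq_mul]]
    exact Finset.sum_congr rfl fun i _ => Stmt8Aux.step v hv hsupp i j
  rw [Finset.mul_sum]
  simp only [hn]
  simp only [Finset.sum_add_distrib, Finset.sum_sub_distrib, ← Finset.mul_sum]
  have SCB : (∑ j : Fin n, ∑ i : Fin n, ∫ x : EuclideanSpace ℝ (Fin n),
      (x i * pd v x j * hess v x i j) * Real.exp (-‖x‖ ^ 2))
      = ∑ i : Fin n, ∑ j : Fin n, ∫ x : EuclideanSpace ℝ (Fin n),
          (x i * pd v x j * hess v x i j) * Real.exp (-‖x‖ ^ 2) := Finset.sum_comm ..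
  have SCC : (∑ j : Fin n, ∑ i : Fin n, ∫ x : EuclideanSpace ℝ (Fin n),
      (x i ^ 2 * pd v x j ^ 2) * Real.exp (-‖x‖ ^ 2))
      = ∑ i : Fin n, ∑ j : Fin n, ∫ x : EuclideanSpace ℝ (Fin n),
          (x i ^ 2 * pd v x j ^ 2) * Real.exp (-‖x‖ ^ 2) := Finset.sum_comm ..
  linarith [SCB, SCC]
end

section
/- For every c ∈ ℝ and v ∈ C₀^∞(ℝ^n), ∫ |∇[(v - c) e^{-|x|²/2}]|² dx = ∫ |∇v|² e^{-|x|²} dx + n ∫ (v-c)² e^{-|x|²} dx - ∫ |x|² (v-c)² e^{-|x|²} dx. -/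
open MeasureTheory Real

lemma grad_norm_sq {n : ℕ} (f : EuclideanSpace ℝ (Fin n) → ℝ) (x : EuclideanSpace ℝ (Fin n)) :
    ‖gradient f x‖ ^ 2 = ∑ i, (fderiv ℝ f x (EuclideanSpace.single i 1)) ^ 2 := by
  have h : ∀ i, gradient f x i = fderiv ℝ f x (EuclideanSpace.single i 1) := by
    intro i
    have := EuclideanSpace.inner_single_right (𝕜 := ℝ) i 1 (gradient f x)
    have h2 := InnerProductSpace.toDual_symm_apply (𝕜 := ℝ)
      (y := fderiv ℝ f x) (x := EuclideanSpace.single i 1)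
    simp only [gradient] at *
    rw [← h2, this]; simp
  rw [EuclideanSpace.norm_eq]
  rw [Real.sq_sqrt (by positivity)]
  congr 1; ext i; rw [h i]; simp

lemma gauss_int {n : ℕ} {b : ℝ} (hb : 0 < b) :
    Integrable (fun x : EuclideanSpace ℝ (Fin n) => rexp (-b * ‖x‖ ^ 2)) := by
  have := (GaussianFourier.integrable_cexp_neg_mul_sq_norm_add
    (V := EuclideanSpace ℝ (Fin n)) (b := (b : ℂ)) (by simpa using hb) 0 0).norm
  convert this using 2 with x
  simp [Complex.norm_exp, ← Complex.ofReal_pow]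

lemma poly_gauss_int {n : ℕ} :
    Integrable (fun x : EuclideanSpace ℝ (Fin n) => (1 + ‖x‖ ^ 2) * rexp (-‖x‖ ^ 2)) := by
  have hmeas : AEStronglyMeasurable
      (fun x : EuclideanSpace ℝ (Fin n) => (1 + ‖x‖ ^ 2) * rexp (-‖x‖ ^ 2)) volume := by
    apply Continuous.aestronglyMeasurable; fun_prop
  apply Integrable.mono' ((gauss_int (n := n) (b := (1:ℝ)/2) (by norm_num)).const_mul 2) hmeas
  filter_upwards with x
  have ht : (0:ℝ) ≤ ‖x‖ ^ 2 := by positivity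
  have h1 : 1 + ‖x‖ ^ 2 ≤ 2 * rexp (‖x‖ ^ 2 / 2) := by
    have := Real.add_one_le_exp (‖x‖ ^ 2 / 2)
    nlinarith
  rw [Real.norm_eq_abs, abs_of_nonneg (by positivity)]
  have h2 : rexp (-(1/2) * ‖x‖ ^ 2) = rexp (‖x‖^2/2) * rexp (-‖x‖^2) := by
    rw [← Real.exp_add]; ring_nf
  rw [h2]
  have h3 : (0:ℝ) < rexp (-‖x‖ ^2) := Real.exp_pos _
  nlinarith

lemma bdd_gauss_int {n : ℕ} (h : EuclideanSpace ℝ (Fin n) → ℝ) (hc : Continuous h)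
    (C : ℝ) (hb : ∀ x, |h x| ≤ C * (1 + ‖x‖ ^ 2)) :
    Integrable (fun x => h x * rexp (-‖x‖ ^ 2)) := by
  have hmeas : AEStronglyMeasurable
      (fun x : EuclideanSpace ℝ (Fin n) => h x * rexp (-‖x‖ ^ 2)) volume := by
    apply Continuous.aestronglyMeasurable; fun_prop
  apply Integrable.mono' (poly_gauss_int.const_mul C) hmeas
  filter_upwards with x
  rw [Real.norm_eq_abs, abs_mul, abs_of_nonneg (Real.exp_pos _).le]
  have := hb x
  have h3 : (0:ℝ) < rexp (-‖x‖ ^2) := Real.exp_pos _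
  nlinarith [abs_nonneg (h x)]

lemma hasFDerivAt_gauss {n : ℕ} (b : ℝ) (x : EuclideanSpace ℝ (Fin n)) :
    HasFDerivAt (fun y : EuclideanSpace ℝ (Fin n) => rexp (-b * ‖y‖ ^ 2))
      (rexp (-b * ‖x‖ ^ 2) • ((-b) • (2 • innerSL ℝ x))) x := by
  have h1 : HasFDerivAt (fun y : EuclideanSpace ℝ (Fin n) => -b * ‖y‖ ^ 2)
      ((-b) • (2 • innerSL ℝ x)) x :=
    ((hasStrictFDerivAt_norm_sq x).hasFDerivAt).const_mul (-b)
  exact (Real.hasDerivAt_exp _).comp_hasFDerivAt x h1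

lemma hasFDerivAt_psi {n : ℕ} (x : EuclideanSpace ℝ (Fin n)) :
    HasFDerivAt (fun y : EuclideanSpace ℝ (Fin n) => rexp (-‖y‖ ^ 2))
      (rexp (-‖x‖ ^ 2) • ((-1 : ℝ) • (2 • innerSL ℝ x))) x := by
  simpa [neg_one_mul] using hasFDerivAt_gauss (n := n) 1 x

lemma norm_sq_eq_sum {n : ℕ} (x : EuclideanSpace ℝ (Fin n)) : ‖x‖ ^ 2 = ∑ i, (x i) ^ 2 := by
  rw [EuclideanSpace.norm_eq, Real.sq_sqrt (by positivity)]
  simp [sq_abs]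

lemma coord_sq_le {n : ℕ} (x : EuclideanSpace ℝ (Fin n)) (i : Fin n) : (x i) ^ 2 ≤ ‖x‖ ^ 2 := by
  rw [norm_sq_eq_sum]
  exact Finset.single_le_sum (f := fun j => (x j) ^ 2) (fun j _ => sq_nonneg _)
    (Finset.mem_univ i)

lemma innerSL_single {n : ℕ} (x : EuclideanSpace ℝ (Fin n)) (i : Fin n) :
    (innerSL ℝ x) (EuclideanSpace.single i 1) = x i := by
  simp [EuclideanSpace.inner_single_right]

lemma gauss_deriv_apply {n : ℕ} (b : ℝ) (x : EuclideanSpace ℝ (Fin n)) (i : Fin n) :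
    (rexp (-b * ‖x‖ ^ 2) • ((-b) • (2 • innerSL ℝ x))) (EuclideanSpace.single i 1)
      = -2 * b * x i * rexp (-b * ‖x‖ ^ 2) := by
  simp only [ContinuousLinearMap.coe_smul', Pi.smul_apply, smul_eq_mul,
    ContinuousLinearMap.smul_apply, innerSL_single]
  ring

lemma Gi_hasfd {n : ℕ} (i : Fin n) (x : EuclideanSpace ℝ (Fin n)) :
    HasFDerivAt (fun y : EuclideanSpace ℝ (Fin n) => y i * rexp (-‖y‖ ^ 2))
      ((x i) • (rexp (-‖x‖ ^ 2) • ((-1 : ℝ) • (2 • innerSL ℝ x)))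
        + rexp (-‖x‖ ^ 2) • (EuclideanSpace.proj (𝕜 := ℝ) i)) x := by
  have h1 : HasFDerivAt (fun y : EuclideanSpace ℝ (Fin n) => y i)
      (EuclideanSpace.proj (𝕜 := ℝ) i) x := (EuclideanSpace.proj (𝕜 := ℝ) i).hasFDerivAt
  exact h1.mul (hasFDerivAt_psi x)

lemma Gi_fderiv_apply {n : ℕ} (i : Fin n) (x : EuclideanSpace ℝ (Fin n)) :
    fderiv ℝ (fun y : EuclideanSpace ℝ (Fin n) => y i * rexp (-‖y‖ ^ 2)) x
        (EuclideanSpace.single i 1)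
      = (1 - 2 * (x i) ^ 2) * rexp (-‖x‖ ^ 2) := by
  rw [(Gi_hasfd i x).fderiv]
  have h2 : (EuclideanSpace.proj (𝕜 := ℝ) i) (EuclideanSpace.single i 1) = 1 := by
    simp [EuclideanSpace.single_apply]
  simp only [ContinuousLinearMap.add_apply, ContinuousLinearMap.coe_smul', Pi.smul_apply,
    smul_eq_mul, ContinuousLinearMap.smul_apply, innerSL_single, h2]
  ring

section Main

variable {n : ℕ}

local notation "E" => EuclideanSpace ℝ (Fin n)

lemma ibp_step (c : ℝ) (v : E → ℝ) (hv : ContDiff ℝ (⊤ : ℕ∞) v) (hsupp : HasCompactSupport v)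
    (A : ℝ) (hA : ∀ x, |v x - c| ≤ A) (i : Fin n) :
    ∫ x : E, (2 * (v x - c) * fderiv ℝ v x (EuclideanSpace.single i 1))
        * (x i * rexp (-‖x‖ ^ 2))
      = ∫ x : E, (v x - c) ^ 2 * ((2 * (x i) ^ 2 - 1) * rexp (-‖x‖ ^ 2)) := by
  have hvd : Differentiable ℝ v := hv.differentiable (by simp)
  have hA0 : 0 ≤ A := (abs_nonneg _).trans (hA 0)
  have hDvc : Continuous fun x : E => fderiv ℝ v x := hv.continuous_fderiv (by simp)
  have hDic : Continuous fun x : E => fderiv ℝ v x (EuclideanSpace.single i 1) :=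
    hDvc.clm_apply continuous_const
  have hu2d : ∀ x : E, HasFDerivAt (fun y => (v y - c) ^ 2)
      ((2 * (v x - c)) • fderiv ℝ v x) x := by
    intro x
    have h1 : HasFDerivAt (fun y => v y - c) (fderiv ℝ v x) x :=
      (hvd x).hasFDerivAt.sub_const c
    have h2 := h1.mul h1
    have h3 : (fun y => (v y - c) ^ 2) = fun y => (v y - c) * (v y - c) := by
      funext y; ring
    rw [h3]
    refine h2.congr_fderiv ?_
    rw [show (2 * (v x - c)) = (v x - c) + (v x - c) by ring, add_smul]
  have hu2fd : ∀ x : E, fderiv ℝ (fun y => (v y - c) ^ 2) x (EuclideanSpace.single i 1)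
      = 2 * (v x - c) * fderiv ℝ v x (EuclideanSpace.single i 1) := by
    intro x
    rw [(hu2d x).fderiv]; simp [mul_assoc]
  have hS : Integrable (fun x : E =>
      fderiv ℝ (fun y => (v y - c) ^ 2) x (EuclideanSpace.single i 1)
        * (x i * rexp (-‖x‖ ^ 2))) := by
    have hcont : Continuous (fun x : E =>
        fderiv ℝ (fun y => (v y - c) ^ 2) x (EuclideanSpace.single i 1)
          * (x i * rexp (-‖x‖ ^ 2))) := by
      have : Continuous fun x : E => 2 * (v x - c)
          * fderiv ℝ v x (EuclideanSpace.single i 1) * (x i * rexp (-‖x‖ ^ 2)) := by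
        apply Continuous.mul
        · exact (continuous_const.mul (hv.continuous.sub continuous_const)).mul hDic
        · exact ((EuclideanSpace.proj (𝕜 := ℝ) i).continuous).mul (by fun_prop)
      convert this using 1; funext x; rw [hu2fd]
    have hcs : HasCompactSupport (fun x : E =>
        fderiv ℝ (fun y => (v y - c) ^ 2) x (EuclideanSpace.single i 1)
          * (x i * rexp (-‖x‖ ^ 2))) := by
      apply (hsupp.fderiv_apply ℝ (EuclideanSpace.single i 1)).mono
      intro x hx
      simp only [Function.mem_support] at hx ⊢
      intro h0
      apply hx
      rw [hu2fd, h0]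
      ring
    exact hcont.integrable_of_hasCompactSupport hcs
  have hfg' : Integrable (fun x : E => (v x - c) ^ 2
      * ((1 - 2 * (x i) ^ 2) * rexp (-‖x‖ ^ 2))) := by
    have := bdd_gauss_int (fun x : E => (v x - c) ^ 2 * (1 - 2 * (x i) ^ 2))
      (by fun_prop) (2 * A ^ 2) (fun x => ?_)
    · convert this using 1; funext x; ring
    · have h1 := hA x
      have h2 := coord_sq_le x i
      have h3 := sq_nonneg (x i)
      rw [abs_mul, abs_of_nonneg (sq_nonneg (v x - c))]
      have h4 : |1 - 2 * x i ^ 2| ≤ 1 + 2 * ‖x‖ ^ 2 := by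
        rw [abs_le]; constructor <;> nlinarith
      have h5 : (v x - c) ^ 2 ≤ A ^ 2 := by nlinarith [abs_nonneg (v x - c), sq_abs (v x - c)]
      nlinarith [sq_nonneg (v x - c), norm_nonneg x, sq_nonneg ‖x‖]
  have hfg : Integrable (fun x : E => (v x - c) ^ 2 * (x i * rexp (-‖x‖ ^ 2))) := by
    have := bdd_gauss_int (fun x : E => (v x - c) ^ 2 * x i)
      (by fun_prop) (A ^ 2) (fun x => ?_)
    · convert this using 1; funext x; ring
    · have h1 := hA x
      have h5 : (v x - c) ^ 2 ≤ A ^ 2 := by nlinarith [abs_nonneg (v x - c), sq_abs (v x - c)]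
      have h6 : |x i| ≤ ‖x‖ := by
        have := coord_sq_le x i
        have := norm_nonneg x
        nlinarith [abs_nonneg (x i), sq_abs (x i)]
      rw [abs_mul, abs_of_nonneg (sq_nonneg (v x - c))]
      nlinarith [sq_nonneg (v x - c), norm_nonneg x, abs_nonneg (x i), sq_nonneg (‖x‖ - 1)]
  have key := integral_mul_fderiv_eq_neg_fderiv_mul_of_integrable (μ := volume)
    (f := fun x : E => (v x - c) ^ 2) (g := fun x : E => x i * rexp (-‖x‖ ^ 2))
    (v := EuclideanSpace.single i 1) hS
    (by simpa only [Gi_fderiv_apply] using hfg') hfg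
    (fun x _ => (hu2d x).differentiableAt) (fun x _ => (Gi_hasfd i x).differentiableAt)
  simp only [Gi_fderiv_apply, hu2fd] at key
  have key2 : (∫ x : E, (2 * (v x - c) * fderiv ℝ v x (EuclideanSpace.single i 1))
        * (x i * rexp (-‖x‖ ^ 2)))
      = -∫ x : E, (v x - c) ^ 2 * ((1 - 2 * (x i) ^ 2) * rexp (-‖x‖ ^ 2)) := by
    linarith [key]
  rw [key2, ← integral_neg]
  congr 1; funext x; ring

end Main

theorem stmt15 (n : ℕ) (c : ℝ) (v : EuclideanSpace ℝ (Fin n) → ℝ)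
    (hv : ContDiff ℝ (⊤ : ℕ∞) v) (hsupp : HasCompactSupport v) :
    (∫ x, ‖gradient (fun y => (v y - c) * Real.exp (-‖y‖ ^ 2 / 2)) x‖ ^ 2)
      = (∫ x, ‖gradient v x‖ ^ 2 * Real.exp (-‖x‖ ^ 2))
        + (n : ℝ) * (∫ x, (v x - c) ^ 2 * Real.exp (-‖x‖ ^ 2))
        - ∫ x, ‖x‖ ^ 2 * (v x - c) ^ 2 * Real.exp (-‖x‖ ^ 2) := by
  have hvd : Differentiable ℝ v := hv.differentiable (by simp)
  have hDvc : Continuous fun x : EuclideanSpace ℝ (Fin n) => fderiv ℝ v x :=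
    hv.continuous_fderiv (by simp)
  have hDic : ∀ i : Fin n, Continuous fun x : EuclideanSpace ℝ (Fin n) =>
      fderiv ℝ v x (EuclideanSpace.single i 1) := fun i => hDvc.clm_apply continuous_const
  obtain ⟨A₀, hA₀⟩ := hsupp.exists_bound_of_continuous hv.continuous
  set A : ℝ := A₀ + |c| with hAdef
  have hA : ∀ x, |v x - c| ≤ A := by
    intro x
    calc |v x - c| ≤ |v x| + |c| := abs_sub _ _
      _ ≤ A₀ + |c| := by have := hA₀ x; rw [Real.norm_eq_abs] at this; linarith
  have hA0 : 0 ≤ A := (abs_nonneg _).trans (hA 0)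
  -- replace the exponent form
  have hfun : (fun y : EuclideanSpace ℝ (Fin n) => (v y - c) * Real.exp (-‖y‖ ^ 2 / 2))
      = fun y => (v y - c) * rexp (-(1/2 : ℝ) * ‖y‖ ^ 2) := by
    funext y; rw [show -‖y‖ ^ 2 / 2 = -(1/2 : ℝ) * ‖y‖ ^ 2 by ring]
  rw [hfun]
  -- derivative of the product
  have hFd : ∀ x : EuclideanSpace ℝ (Fin n),
      HasFDerivAt (fun y => (v y - c) * rexp (-(1/2 : ℝ) * ‖y‖ ^ 2))
        ((v x - c) • (rexp (-(1/2 : ℝ) * ‖x‖ ^ 2) • ((-(1/2 : ℝ)) • (2 • innerSL ℝ x)))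
          + rexp (-(1/2 : ℝ) * ‖x‖ ^ 2) • fderiv ℝ v x) x := by
    intro x
    exact ((hvd x).hasFDerivAt.sub_const c).mul (hasFDerivAt_gauss (1/2 : ℝ) x)
  have hDF : ∀ (x : EuclideanSpace ℝ (Fin n)) (i : Fin n),
      fderiv ℝ (fun y => (v y - c) * rexp (-(1/2 : ℝ) * ‖y‖ ^ 2)) x (EuclideanSpace.single i 1)
        = (v x - c) * (-(x i) * rexp (-(1/2 : ℝ) * ‖x‖ ^ 2))
          + rexp (-(1/2 : ℝ) * ‖x‖ ^ 2) * fderiv ℝ v x (EuclideanSpace.single i 1) := by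
    intro x i
    rw [(hFd x).fderiv]
    have h1 := gauss_deriv_apply (1/2 : ℝ) x i
    simp only [ContinuousLinearMap.add_apply, ContinuousLinearMap.coe_smul', Pi.smul_apply,
      smul_eq_mul, ContinuousLinearMap.smul_apply, innerSL_single] at h1 ⊢
    ring
  have hsq : ∀ x : EuclideanSpace ℝ (Fin n),
      rexp (-(1/2 : ℝ) * ‖x‖ ^ 2) * rexp (-(1/2 : ℝ) * ‖x‖ ^ 2) = rexp (-‖x‖ ^ 2) := by
    intro x; rw [← Real.exp_add]; congr 1; ring
  -- pointwise key identity
  have key : ∀ x : EuclideanSpace ℝ (Fin n),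
      ‖gradient (fun y => (v y - c) * rexp (-(1/2 : ℝ) * ‖y‖ ^ 2)) x‖ ^ 2
        = ‖gradient v x‖ ^ 2 * rexp (-‖x‖ ^ 2)
          + ‖x‖ ^ 2 * (v x - c) ^ 2 * rexp (-‖x‖ ^ 2)
          - ∑ i, (2 * (v x - c) * fderiv ℝ v x (EuclideanSpace.single i 1))
              * (x i * rexp (-‖x‖ ^ 2)) := by
    intro x
    rw [grad_norm_sq _ x, grad_norm_sq v x]
    set Ψ : ℝ := rexp (-‖x‖ ^ 2) with hΨ
    rw [norm_sq_eq_sum x,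
      Finset.sum_mul, Finset.sum_mul, Finset.sum_mul,
      ← Finset.sum_add_distrib, ← Finset.sum_sub_distrib]
    apply Finset.sum_congr rfl
    intro i _
    rw [hDF x i, hΨ, ← hsq x]
    ring
  simp only [key]
  -- integrability facts
  set ψ : EuclideanSpace ℝ (Fin n) → ℝ := fun x => rexp (-‖x‖ ^ 2) with hψdef
  have hT1 : Integrable (fun x : EuclideanSpace ℝ (Fin n) =>
      ‖gradient v x‖ ^ 2 * rexp (-‖x‖ ^ 2)) := by
    have hcont : Continuous (fun x : EuclideanSpace ℝ (Fin n) =>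
        ‖gradient v x‖ ^ 2 * rexp (-‖x‖ ^ 2)) := by
      have h1 : Continuous fun x : EuclideanSpace ℝ (Fin n) => ∑ i,
          (fderiv ℝ v x (EuclideanSpace.single i 1)) ^ 2 :=
        continuous_finset_sum _ (fun i _ => (hDic i).pow 2)
      have : Continuous fun x : EuclideanSpace ℝ (Fin n) =>
          (∑ i, (fderiv ℝ v x (EuclideanSpace.single i 1)) ^ 2) * rexp (-‖x‖ ^ 2) :=
        h1.mul (by fun_prop)
      convert this using 1; funext x; rw [grad_norm_sq v x]
    have hcs : HasCompactSupport (fun x : EuclideanSpace ℝ (Fin n) =>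
        ‖gradient v x‖ ^ 2 * rexp (-‖x‖ ^ 2)) := by
      apply (hsupp.fderiv ℝ).mono
      intro x hx
      simp only [Function.mem_support] at hx ⊢
      intro h0
      apply hx
      have hg0 : gradient v x = 0 := by simp [gradient, h0]
      rw [hg0]
      simp
    exact hcont.integrable_of_hasCompactSupport hcs
  have hT2 : Integrable (fun x : EuclideanSpace ℝ (Fin n) =>
      (v x - c) ^ 2 * rexp (-‖x‖ ^ 2)) := by
    apply bdd_gauss_int (fun x => (v x - c) ^ 2) (by fun_prop) (A ^ 2)
    intro x
    have h1 := hA x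
    rw [abs_of_nonneg (sq_nonneg (v x - c))]
    have h5 : (v x - c) ^ 2 ≤ A ^ 2 := by nlinarith [abs_nonneg (v x - c), sq_abs (v x - c)]
    nlinarith [h5, sq_nonneg ‖x‖, mul_nonneg (sq_nonneg A) (sq_nonneg ‖x‖)]
  have hT3 : Integrable (fun x : EuclideanSpace ℝ (Fin n) =>
      ‖x‖ ^ 2 * (v x - c) ^ 2 * rexp (-‖x‖ ^ 2)) := by
    apply bdd_gauss_int (fun x => ‖x‖ ^ 2 * (v x - c) ^ 2) (by fun_prop) (A ^ 2)
    intro x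
    have h1 := hA x
    rw [abs_of_nonneg (by positivity)]
    have h5 : (v x - c) ^ 2 ≤ A ^ 2 := by nlinarith [abs_nonneg (v x - c), sq_abs (v x - c)]
    nlinarith [h5, sq_nonneg ‖x‖, sq_nonneg A,
      mul_le_mul_of_nonneg_left h5 (sq_nonneg ‖x‖)]
  have hSi : ∀ i : Fin n, Integrable (fun x : EuclideanSpace ℝ (Fin n) =>
      (2 * (v x - c) * fderiv ℝ v x (EuclideanSpace.single i 1))
        * (x i * rexp (-‖x‖ ^ 2))) := by
    intro i
    have hcont : Continuous (fun x : EuclideanSpace ℝ (Fin n) =>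
        (2 * (v x - c) * fderiv ℝ v x (EuclideanSpace.single i 1))
          * (x i * rexp (-‖x‖ ^ 2))) := by
      apply Continuous.mul
      · exact (continuous_const.mul (hv.continuous.sub continuous_const)).mul (hDic i)
      · exact ((EuclideanSpace.proj (𝕜 := ℝ) i).continuous).mul (by fun_prop)
    have hcs : HasCompactSupport (fun x : EuclideanSpace ℝ (Fin n) =>
        (2 * (v x - c) * fderiv ℝ v x (EuclideanSpace.single i 1))
          * (x i * rexp (-‖x‖ ^ 2))) := by
      apply (hsupp.fderiv_apply ℝ (EuclideanSpace.single i 1)).mono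
      intro x hx
      simp only [Function.mem_support] at hx ⊢
      intro h0
      apply hx
      rw [h0]
      ring
    exact hcont.integrable_of_hasCompactSupport hcs
  have hSum : Integrable (fun x : EuclideanSpace ℝ (Fin n) =>
      ∑ i, (2 * (v x - c) * fderiv ℝ v x (EuclideanSpace.single i 1))
        * (x i * rexp (-‖x‖ ^ 2))) :=
    integrable_finset_sum _ (fun i _ => hSi i)
  have hT13 : Integrable (fun x : EuclideanSpace ℝ (Fin n) =>
      ‖gradient v x‖ ^ 2 * rexp (-‖x‖ ^ 2)
        + ‖x‖ ^ 2 * (v x - c) ^ 2 * rexp (-‖x‖ ^ 2)) := hT1.add hT3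
  rw [integral_sub hT13 hSum, integral_add hT1 hT3,
    integral_finset_sum _ (fun i _ => hSi i)]
  have hBi : ∀ i : Fin n, Integrable (fun x : EuclideanSpace ℝ (Fin n) =>
      (v x - c) ^ 2 * ((2 * (x i) ^ 2 - 1) * rexp (-‖x‖ ^ 2))) := by
    intro i
    have := bdd_gauss_int (fun x : EuclideanSpace ℝ (Fin n) =>
      (v x - c) ^ 2 * (2 * (x i) ^ 2 - 1)) (by fun_prop) (2 * A ^ 2) (fun x => ?_)
    · exact this.congr (Filter.Eventually.of_forall fun x => by ring)
    · have h1 := hA x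
      have h2 := coord_sq_le x i
      have h3 := sq_nonneg (x i)
      rw [abs_mul, abs_of_nonneg (sq_nonneg (v x - c))]
      have h4 : |2 * x i ^ 2 - 1| ≤ 1 + 2 * ‖x‖ ^ 2 := by
        rw [abs_le]; constructor <;> nlinarith
      have h5 : (v x - c) ^ 2 ≤ A ^ 2 := by nlinarith [abs_nonneg (v x - c), sq_abs (v x - c)]
      nlinarith [sq_nonneg (v x - c), norm_nonneg x, sq_nonneg ‖x‖]
  have hibp : (∑ i, ∫ x : EuclideanSpace ℝ (Fin n),
        (2 * (v x - c) * fderiv ℝ v x (EuclideanSpace.single i 1))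
          * (x i * rexp (-‖x‖ ^ 2)))
      = 2 * (∫ x, ‖x‖ ^ 2 * (v x - c) ^ 2 * rexp (-‖x‖ ^ 2))
        - (n : ℝ) * ∫ x, (v x - c) ^ 2 * rexp (-‖x‖ ^ 2) := by
    rw [Finset.sum_congr rfl (fun i _ => ibp_step c v hv hsupp A hA i),
      ← integral_finset_sum _ (fun i _ => hBi i)]
    have hpt : (fun x : EuclideanSpace ℝ (Fin n) =>
        ∑ i, (v x - c) ^ 2 * ((2 * (x i) ^ 2 - 1) * rexp (-‖x‖ ^ 2)))
        = fun x => 2 * (‖x‖ ^ 2 * (v x - c) ^ 2 * rexp (-‖x‖ ^ 2))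
            - (n : ℝ) * ((v x - c) ^ 2 * rexp (-‖x‖ ^ 2)) := by
      funext x
      set Ψ : ℝ := rexp (-‖x‖ ^ 2) with hΨ
      rw [norm_sq_eq_sum x]
      have hper : ∀ i : Fin n, (v x - c) ^ 2 * ((2 * (x i) ^ 2 - 1) * Ψ)
          = 2 * ((x i) ^ 2 * (v x - c) ^ 2 * Ψ) - (v x - c) ^ 2 * Ψ := by
        intro i; ring
      rw [Finset.sum_congr rfl (fun i _ => hper i), Finset.sum_sub_distrib,
        ← Finset.mul_sum, Finset.sum_const, Finset.card_univ, Fintype.card_fin,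
        nsmul_eq_mul]
      have : ∑ i, (x i) ^ 2 * (v x - c) ^ 2 * Ψ = (∑ i, (x i) ^ 2) * (v x - c) ^ 2 * Ψ := by
        rw [Finset.sum_mul, Finset.sum_mul]
      rw [this]
    rw [hpt, integral_sub (hT3.const_mul 2) (hT2.const_mul (n : ℝ)),
      integral_const_mul, integral_const_mul]
  rw [hibp]
  ring
end

section
/- For a smooth radial compactly supported function u on ℝ^n (u(x) = f(|x|)) and α with n - 2α > 0, n + 2α > 0, one has ∫₀^∞ (f''(r) + ((n-1)/r) f'(r) - ((n+2α)/r) f'(r))² r^{n-2α-1} dr = ∫₀^∞ (f''(r) + ((n-1)/r) f'(r))² r^{n-2α-1} dr, i.e., |S^{n-1}| ∫₀^∞ (f'' + (n-1)f'/r - (n+2α)f'/r)² r^{n-2α-1} dr = ∫_{ℝ^n} (Δu)²/|x|^{2α} dx. -/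
open MeasureTheory Real Set Filter Topology
open scoped ContDiff

private lemma cont_of_locally_zero {a : ℝ} (ha : 0 < a) {g : ℝ → ℝ}
    (h0 : ∀ r, r < a → g r = 0)
    (hc : ∀ r, 0 < r → ContinuousAt g r) : Continuous g := by
  rw [continuous_iff_continuousAt]
  intro r
  rcases lt_or_ge r a with h | h
  · exact continuousAt_const.congr (by
      filter_upwards [Iio_mem_nhds h] with t ht using (h0 t ht).symm)
  · exact hc r (lt_of_lt_of_le ha h)

theorem stmt19 (n : ℕ) (hn : 1 ≤ n) (α : ℝ)
    (h1 : (n : ℝ) - 2 * α > 0) (h2 : (n : ℝ) + 2 * α > 0)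
    (f : ℝ → ℝ) (hf : ContDiff ℝ (⊤ : ℕ∞) f) (hfsupp : HasCompactSupport f)
    (hf0 : tsupport f ⊆ Set.Ioi 0)
    (u : EuclideanSpace ℝ (Fin n) → ℝ) (hu : ∀ x, u x = f ‖x‖) :
    ((∫ r in Set.Ioi (0 : ℝ),
        (deriv (deriv f) r + (((n : ℝ) - 1) / r) * deriv f r
          - (((n : ℝ) + 2 * α) / r) * deriv f r) ^ 2 * r ^ ((n : ℝ) - 2 * α - 1))
      = ∫ r in Set.Ioi (0 : ℝ),
          (deriv (deriv f) r + (((n : ℝ) - 1) / r) * deriv f r) ^ 2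
            * r ^ ((n : ℝ) - 2 * α - 1))
    ∧ ((2 * π ^ ((n : ℝ) / 2) / Real.Gamma ((n : ℝ) / 2))
        * (∫ r in Set.Ioi (0 : ℝ),
            (deriv (deriv f) r + (((n : ℝ) - 1) / r) * deriv f r
              - (((n : ℝ) + 2 * α) / r) * deriv f r) ^ 2 * r ^ ((n : ℝ) - 2 * α - 1))
        = ∫ x, (lap u x) ^ 2 / ‖x‖ ^ (2 * α)) := by
  have hf' : ContDiff ℝ ∞ f := hf.of_le (by simp)
  have hpart1 : (∫ r in Set.Ioi (0 : ℝ),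
        (deriv (deriv f) r + (((n : ℝ) - 1) / r) * deriv f r
          - (((n : ℝ) + 2 * α) / r) * deriv f r) ^ 2 * r ^ ((n : ℝ) - 2 * α - 1))
      = ∫ r in Set.Ioi (0 : ℝ),
          (deriv (deriv f) r + (((n : ℝ) - 1) / r) * deriv f r) ^ 2
            * r ^ ((n : ℝ) - 2 * α - 1) := by
    have hdf : Differentiable ℝ f := (contDiff_infty_iff_deriv.mp hf').1
    have hf1 : ContDiff ℝ ∞ (deriv f) := (contDiff_infty_iff_deriv.mp hf').2
    have hdf1 : Differentiable ℝ (deriv f) := (contDiff_infty_iff_deriv.mp hf1).1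
    have hf2 : ContDiff ℝ ∞ (deriv (deriv f)) := (contDiff_infty_iff_deriv.mp hf1).2
    have hts1 : tsupport (deriv f) ⊆ tsupport f :=
      closure_minimal support_deriv_subset (isClosed_tsupport f)
    have hts2 : tsupport (deriv (deriv f)) ⊆ tsupport f :=
      (closure_minimal support_deriv_subset (isClosed_tsupport (deriv f))).trans hts1
    have hz : ∀ r ∉ tsupport f, f r = 0 ∧ deriv f r = 0 ∧ deriv (deriv f) r = 0 :=
      fun r hr => ⟨image_eq_zero_of_notMem_tsupport hr,
        image_eq_zero_of_notMem_tsupport fun h => hr (hts1 h),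
        image_eq_zero_of_notMem_tsupport fun h => hr (hts2 h)⟩
    obtain ⟨a, ha, haz⟩ : ∃ a, 0 < a ∧ ∀ r, r < a → r ∉ tsupport f := by
      rcases eq_empty_or_nonempty (tsupport f) with h | h
      · exact ⟨1, one_pos, fun r _ hr => by simp [h] at hr⟩
      · exact ⟨sInf (tsupport f), hf0 (hfsupp.sInf_mem h),
          fun r hr hrK => absurd (csInf_le hfsupp.bddBelow hrK) (not_le.mpr hr)⟩
    obtain ⟨b, hbz⟩ : ∃ b, ∀ r, b < r → r ∉ tsupport f := by
      obtain ⟨b, hb⟩ := hfsupp.bddAbove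
      exact ⟨b, fun r hr hrK => absurd (hb hrK) (not_le.mpr hr)⟩
    set c : ℝ := (n : ℝ) - 2 * α - 2 with hc
    set G' : ℝ → ℝ := fun r =>
      2 * deriv f r * deriv (deriv f) r * r ^ c + (deriv f r) ^ 2 * (c * r ^ (c - 1))
      with hG'
    set R : ℝ → ℝ := fun r =>
      (deriv (deriv f) r + (((n : ℝ) - 1) / r) * deriv f r) ^ 2 * r ^ ((n : ℝ) - 2 * α - 1)
      with hR
    -- derivative of G
    have hgderiv : ∀ r ∈ Ioi (0:ℝ), HasDerivAt (fun t => (deriv f t) ^ 2 * t ^ c) (G' r) r := by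
      intro r hr
      have h1 : HasDerivAt (fun t => (deriv f t) ^ 2) (2 * deriv f r * deriv (deriv f) r) r := by
        have := ((hdf1 r).hasDerivAt).fun_pow 2
        simpa [mul_comm, mul_assoc, mul_left_comm] using this
      have h2 : HasDerivAt (fun t : ℝ => t ^ c) (c * r ^ (c - 1)) r :=
        hasDerivAt_rpow_const (Or.inl (ne_of_gt hr))
      exact h1.mul h2
    -- continuity of G'
    have hG'cont : Continuous G' := by
      refine cont_of_locally_zero ha (fun r hr => ?_) (fun r hr => ?_)
      · obtain ⟨-, e1, e2⟩ := hz r (haz r hr)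
        simp [hG', e1, e2]
      · have hrpow : ContinuousAt (fun t : ℝ => t ^ c) r :=
          Real.continuousAt_rpow_const r c (Or.inl (ne_of_gt hr))
        have hrpow' : ContinuousAt (fun t : ℝ => t ^ (c-1)) r :=
          Real.continuousAt_rpow_const r (c-1) (Or.inl (ne_of_gt hr))
        exact ((((continuous_const.mul hf1.continuous).mul hf2.continuous).continuousAt.mul hrpow)).add
          (((hf1.continuous.pow 2).continuousAt).mul (continuousAt_const.mul hrpow'))
    have hG'supp : HasCompactSupport G' := by
      refine HasCompactSupport.intro hfsupp fun r hr => ?_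
      obtain ⟨-, e1, e2⟩ := hz r hr
      simp [hG', e1, e2]
    have hG'int : IntegrableOn G' (Ioi (0:ℝ)) :=
      (hG'cont.integrable_of_hasCompactSupport hG'supp).integrableOn
    -- ∫ G' = 0
    have hintG' : ∫ r in Ioi (0:ℝ), G' r = 0 := by
      have h0 : ContinuousWithinAt (fun t => (deriv f t) ^ 2 * t ^ c) (Ici (0:ℝ)) 0 := by
        have hev : (fun t => (deriv f t) ^ 2 * t ^ c) =ᶠ[𝓝 (0:ℝ)] fun _ => (0:ℝ) := by
          filter_upwards [Iio_mem_nhds ha] with t ht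
          obtain ⟨-, e1, -⟩ := hz t (haz t ht)
          simp [e1]
        exact ((continuousAt_congr hev).mpr continuousAt_const).continuousWithinAt
      have htop : Tendsto (fun t => (deriv f t) ^ 2 * t ^ c) atTop (𝓝 0) := by
        refine Tendsto.congr' ?_ tendsto_const_nhds
        filter_upwards [eventually_gt_atTop b] with t ht
        obtain ⟨-, e1, -⟩ := hz t (hbz t ht)
        simp [e1]
      have := integral_Ioi_of_hasDerivAt_of_tendsto h0 hgderiv hG'int htop
      rw [this]
      obtain ⟨-, e1, -⟩ := hz 0 (haz 0 ha)
      simp [e1]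
    -- continuity and integrability of R
    have hRcont : Continuous R := by
      refine cont_of_locally_zero ha (fun r hr => ?_) (fun r hr => ?_)
      · obtain ⟨-, e1, e2⟩ := hz r (haz r hr)
        simp [hR, e1, e2]
      · have hrpow : ContinuousAt (fun t : ℝ => t ^ ((n:ℝ) - 2*α - 1)) r :=
          Real.continuousAt_rpow_const r _ (Or.inl (ne_of_gt hr))
        exact (((hf2.continuous.continuousAt.add
          (((continuousAt_const.div continuousAt_id (ne_of_gt hr)).mul
            hf1.continuous.continuousAt))).pow 2).mul hrpow)
    have hRsupp : HasCompactSupport R := by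
      refine HasCompactSupport.intro hfsupp fun r hr => ?_
      obtain ⟨-, e1, e2⟩ := hz r hr
      simp [hR, e1, e2]
    have hRint : IntegrableOn R (Ioi (0:ℝ)) :=
      (hRcont.integrable_of_hasCompactSupport hRsupp).integrableOn
    -- pointwise identity
    have hpt : ∀ r ∈ Ioi (0:ℝ),
        (deriv (deriv f) r + (((n : ℝ) - 1) / r) * deriv f r
            - (((n : ℝ) + 2 * α) / r) * deriv f r) ^ 2 * r ^ ((n : ℝ) - 2 * α - 1)
          = R r - ((n:ℝ) + 2*α) * G' r := by
      intro r hr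
      have hr0 : (r:ℝ) ≠ 0 := ne_of_gt hr
      have e1 : r ^ ((n : ℝ) - 2 * α - 1) = r ^ (c - 1) * r * r := by
        rw [show (n : ℝ) - 2 * α - 1 = (c - 1) + 1 + 1 by rw [hc]; ring,
          Real.rpow_add_one hr0, Real.rpow_add_one hr0]
      have e2 : r ^ c = r ^ (c - 1) * r := by
        rw [show c = (c - 1) + 1 by ring, Real.rpow_add_one hr0]
        ring_nf
      simp only [hR, hG']
      rw [e1, e2, hc]
      field_simp
      ring
    calc
      (∫ r in Set.Ioi (0 : ℝ),
          (deriv (deriv f) r + (((n : ℝ) - 1) / r) * deriv f r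
            - (((n : ℝ) + 2 * α) / r) * deriv f r) ^ 2 * r ^ ((n : ℝ) - 2 * α - 1))
        = ∫ r in Ioi (0:ℝ), (R r - ((n:ℝ) + 2*α) * G' r) :=
          setIntegral_congr_fun measurableSet_Ioi hpt
      _ = (∫ r in Ioi (0:ℝ), R r) - ((n:ℝ) + 2*α) * ∫ r in Ioi (0:ℝ), G' r := by
          rw [integral_sub hRint (hG'int.const_mul _), integral_const_mul]
      _ = ∫ r in Ioi (0:ℝ), R r := by rw [hintG']; ring
  set F : ℝ → ℝ := fun s => f (Real.sqrt s) with hFdef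
  have hFf : ∀ r : ℝ, 0 ≤ r → F (r ^ 2) = f r := fun r hr => by
    simp [hFdef, Real.sqrt_sq hr]
  have hFOn : ContDiffOn ℝ ∞ F (Ioi 0) := fun s hs =>
    ((hf'.contDiffAt).comp s (Real.contDiffAt_sqrt (ne_of_gt hs))).contDiffWithinAt
  have hF1On : ContDiffOn ℝ ∞ (deriv F) (Ioi 0) :=
    ((contDiffOn_infty_iff_deriv_of_isOpen isOpen_Ioi).mp hFOn).2
  have hFd : ∀ s ∈ Ioi (0:ℝ), HasDerivAt F (deriv F s) s := fun s hs =>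
    (((contDiffOn_infty_iff_deriv_of_isOpen isOpen_Ioi).mp hFOn).1.differentiableAt
      (isOpen_Ioi.mem_nhds hs)).hasDerivAt
  have hF1d : ∀ s ∈ Ioi (0:ℝ), HasDerivAt (deriv F) (deriv (deriv F) s) s := fun s hs =>
    (((contDiffOn_infty_iff_deriv_of_isOpen isOpen_Ioi).mp hF1On).1.differentiableAt
      (isOpen_Ioi.mem_nhds hs)).hasDerivAt
  -- relations between derivatives of f and F
  have hcomp : ∀ r : ℝ, 0 < r → HasDerivAt (fun t : ℝ => F (t ^ 2)) (deriv F (r ^ 2) * (2 * r)) r := by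
    intro r hr
    have h2 : HasDerivAt (fun t : ℝ => t ^ 2) (2 * r) r := by
      simpa using hasDerivAt_pow 2 r
    exact by have := (hFd (r ^ 2) (mem_Ioi.mpr (by positivity))).comp r h2; exact this
  have hfF : ∀ r : ℝ, 0 < r → deriv f r = deriv F (r ^ 2) * (2 * r) := by
    intro r hr
    have hev : (fun t : ℝ => F (t ^ 2)) =ᶠ[𝓝 r] f := by
      filter_upwards [Ioi_mem_nhds hr] with t ht using hFf t (le_of_lt ht)
    exact ((hcomp r hr).congr_of_eventuallyEq hev.symm).deriv
  have hf2F : ∀ r : ℝ, 0 < r →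
      deriv (deriv f) r = 2 * deriv F (r ^ 2) + 4 * r ^ 2 * deriv (deriv F) (r ^ 2) := by
    intro r hr
    have h2 : HasDerivAt (fun t : ℝ => t ^ 2) (2 * r) r := by
      simpa using hasDerivAt_pow 2 r
    have hd : HasDerivAt (fun t : ℝ => deriv F (t ^ 2) * (2 * t))
        ((deriv (deriv F) (r ^ 2) * (2 * r)) * (2 * r) + deriv F (r ^ 2) * 2) r := by
      have hA : HasDerivAt (fun t : ℝ => deriv F (t ^ 2)) (deriv (deriv F) (r ^ 2) * (2 * r)) r :=
        by have := (hF1d (r ^ 2) (mem_Ioi.mpr (by positivity))).comp r h2; exact this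
      have hB : HasDerivAt (fun t : ℝ => 2 * t) 2 r := by
        simpa using (hasDerivAt_id r).const_mul (2:ℝ)
      simpa using hA.fun_mul hB
    have hev : (fun t : ℝ => deriv F (t ^ 2) * (2 * t)) =ᶠ[𝓝 r] deriv f := by
      filter_upwards [Ioi_mem_nhds hr] with t ht using (hfF t ht).symm
    rw [(hd.congr_of_eventuallyEq hev.symm).deriv]
    ring
  -- Laplacian computation
  have hq : ∀ y : EuclideanSpace ℝ (Fin n), HasFDerivAt (fun z : EuclideanSpace ℝ (Fin n) => ‖z‖ ^ 2)
      ((2:ℕ) • (innerSL ℝ y)) y := fun y => (hasStrictFDerivAt_norm_sq y).hasFDerivAt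
  have huq : u = fun y => F (‖y‖ ^ 2) := by
    funext y
    rw [hu y, hFf ‖y‖ (norm_nonneg y)]
  have hnormsq_pos : ∀ x : EuclideanSpace ℝ (Fin n), x ≠ 0 → (0:ℝ) < ‖x‖ ^ 2 := by
    intro x hx
    have := norm_pos_iff.mpr hx
    positivity
  have hdu : ∀ y : EuclideanSpace ℝ (Fin n), y ≠ 0 →
      HasFDerivAt u (deriv F (‖y‖ ^ 2) • ((2:ℕ) • (innerSL ℝ y))) y := by
    intro y hy
    rw [huq]
    exact by have := (hFd (‖y‖ ^ 2) (mem_Ioi.mpr (hnormsq_pos y hy))).comp_hasFDerivAt y (hq y); exact this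
  have hfdu : ∀ y : EuclideanSpace ℝ (Fin n), y ≠ 0 → ∀ i : Fin n,
      fderiv ℝ u y (EuclideanSpace.single i 1) = deriv F (‖y‖ ^ 2) * (2 * y i) := by
    intro y hy i
    rw [(hdu y hy).fderiv]
    simp [real_inner_comm, EuclideanSpace.inner_single_left, EuclideanSpace.inner_single_right]
  have hlap : ∀ x : EuclideanSpace ℝ (Fin n), x ≠ 0 →
      lap u x = 2 * n * deriv F (‖x‖ ^ 2) + 4 * ‖x‖ ^ 2 * deriv (deriv F) (‖x‖ ^ 2) := by
    intro x hx
    have hs := hnormsq_pos x hx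
    have hsum : ∑ i : Fin n, (x i) ^ 2 = ‖x‖ ^ 2 := by
      rw [EuclideanSpace.norm_eq, Real.sq_sqrt (by positivity)]
      simp [sq_abs]
    have hterm : ∀ i : Fin n,
        fderiv ℝ (fun y => fderiv ℝ u y (EuclideanSpace.single i 1)) x (EuclideanSpace.single i 1)
          = 2 * deriv F (‖x‖ ^ 2) + 4 * deriv (deriv F) (‖x‖ ^ 2) * (x i) ^ 2 := by
      intro i
      have hev : (fun y => fderiv ℝ u y (EuclideanSpace.single i 1))
          =ᶠ[𝓝 x] fun y => deriv F (‖y‖ ^ 2) * (2 * y i) := by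
        filter_upwards [isOpen_compl_singleton.mem_nhds (by simpa using hx)] with y hy
        exact hfdu y hy i
      rw [hev.fderiv_eq]
      have hA : HasFDerivAt (fun y : EuclideanSpace ℝ (Fin n) => deriv F (‖y‖ ^ 2))
          (deriv (deriv F) (‖x‖ ^ 2) • ((2:ℕ) • (innerSL ℝ x))) x :=
        by have := (hF1d (‖x‖ ^ 2) (mem_Ioi.mpr hs)).comp_hasFDerivAt x (hq x); exact this
      have hB : HasFDerivAt (fun y : EuclideanSpace ℝ (Fin n) => 2 * y i)
          ((2:ℝ) • (EuclideanSpace.proj i : EuclideanSpace ℝ (Fin n) →L[ℝ] ℝ)) x :=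
        (EuclideanSpace.proj i : EuclideanSpace ℝ (Fin n) →L[ℝ] ℝ).hasFDerivAt.const_mul 2
      rw [(hA.fun_mul hB).fderiv]
      simp [EuclideanSpace.inner_single_left, real_inner_comm, EuclideanSpace.proj, EuclideanSpace.inner_single_right]
      ring
    rw [lap]
    rw [Finset.sum_congr rfl fun i _ => hterm i]
    rw [Finset.sum_add_distrib, Finset.sum_const, ← Finset.mul_sum, hsum]
    simp [Finset.card_univ]
    ring
  have hlapL : ∀ x : EuclideanSpace ℝ (Fin n), x ≠ 0 →
      lap u x = deriv (deriv f) ‖x‖ + (((n:ℝ) - 1) / ‖x‖) * deriv f ‖x‖ := by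
    intro x hx
    have hr : (0:ℝ) < ‖x‖ := norm_pos_iff.mpr hx
    rw [hlap x hx, hf2F ‖x‖ hr, hfF ‖x‖ hr]
    field_simp
    ring
  -- polar coordinates
  haveI : Nonempty (Fin n) := ⟨⟨0, hn⟩⟩
  haveI : Nontrivial (EuclideanSpace ℝ (Fin n)) := by
    have : (EuclideanSpace.single (⟨0, hn⟩ : Fin n) (1:ℝ)) ≠ 0 := by
      intro h
      have := congrArg (fun z => z (⟨0, hn⟩ : Fin n)) h
      simpa using this
    exact nontrivial_of_ne _ _ this
  have hae : (fun x : EuclideanSpace ℝ (Fin n) => (lap u x) ^ 2 / ‖x‖ ^ (2 * α))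
      =ᵐ[volume] (fun x : EuclideanSpace ℝ (Fin n) =>
        (deriv (deriv f) ‖x‖ + (((n:ℝ) - 1) / ‖x‖) * deriv f ‖x‖) ^ 2 / ‖x‖ ^ (2 * α)) := by
    have h0 : volume ({0} : Set (EuclideanSpace ℝ (Fin n))) = 0 := measure_singleton 0
    refine measure_mono_null ?_ h0
    intro x hx
    simp only [Set.mem_compl_iff, Set.mem_setOf_eq] at hx
    simp only [Set.mem_singleton_iff]
    by_contra hne
    exact hx (by rw [hlapL x hne])
  have hpolar := integral_fun_norm_addHaar (volume : Measure (EuclideanSpace ℝ (Fin n)))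
    (fun r : ℝ => (deriv (deriv f) r + (((n:ℝ) - 1) / r) * deriv f r) ^ 2 / r ^ (2 * α))
  have hΓ1 : 0 < Real.Gamma ((n:ℝ)/2) := Real.Gamma_pos_of_pos (by positivity)
  have hΓ2 : 0 < Real.Gamma ((n:ℝ)/2 + 1) := Real.Gamma_pos_of_pos (by positivity)
  have hball : (volume (Metric.ball (0 : EuclideanSpace ℝ (Fin n)) 1)).toReal
      = Real.sqrt π ^ n / Real.Gamma ((n:ℝ) / 2 + 1) := by
    rw [EuclideanSpace.volume_ball]
    rw [ENNReal.ofReal_one, one_pow, one_mul, Fintype.card_fin]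
    exact ENNReal.toReal_ofReal (by positivity)
  have hnpos : (0:ℝ) < n := by exact_mod_cast hn
  have hconst : (n : ℝ) * (Real.sqrt π ^ n / Real.Gamma ((n:ℝ) / 2 + 1))
      = 2 * π ^ ((n : ℝ) / 2) / Real.Gamma ((n:ℝ) / 2) := by
    have h1 : Real.Gamma ((n:ℝ)/2 + 1) = ((n:ℝ)/2) * Real.Gamma ((n:ℝ)/2) :=
      Real.Gamma_add_one (by positivity)
    have h2 : Real.sqrt π ^ n = π ^ ((n : ℝ)/2) := by
      rw [Real.sqrt_eq_rpow, ← Real.rpow_natCast (π ^ ((1:ℝ)/2)) n, ← Real.rpow_mul pi_nonneg]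
      norm_num
      ring_nf
    rw [h1, h2]
    field_simp
  have hfr : Module.finrank ℝ (EuclideanSpace ℝ (Fin n)) = n := finrank_euclideanSpace_fin
  have hintgr : ∀ y ∈ Ioi (0:ℝ),
      (y ^ (n - 1) : ℝ) • ((deriv (deriv f) y + (((n:ℝ) - 1) / y) * deriv f y) ^ 2 / y ^ (2 * α))
        = (deriv (deriv f) y + (((n:ℝ) - 1) / y) * deriv f y) ^ 2 * y ^ ((n:ℝ) - 2 * α - 1) := by
    intro y hy
    have hy0 : (0:ℝ) < y := hy
    have e : y ^ ((n:ℝ) - 2 * α - 1) = y ^ ((n:ℝ) - 1) * y ^ (-(2 * α)) := by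
      rw [← Real.rpow_add hy0]
      congr 1
      ring
    rw [smul_eq_mul, ← Real.rpow_natCast y (n-1), Nat.cast_sub hn, Nat.cast_one, e,
      div_eq_mul_inv, ← Real.rpow_neg hy0.le]
    ring
  have hmain : (∫ x : EuclideanSpace ℝ (Fin n), (lap u x) ^ 2 / ‖x‖ ^ (2 * α))
      = (2 * π ^ ((n : ℝ) / 2) / Real.Gamma ((n:ℝ) / 2)) *
        ∫ y in Ioi (0:ℝ),
          (deriv (deriv f) y + (((n:ℝ) - 1) / y) * deriv f y) ^ 2 * y ^ ((n:ℝ) - 2 * α - 1) := by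
    rw [integral_congr_ae hae, hpolar, hfr, measureReal_def, hball]
    rw [setIntegral_congr_fun measurableSet_Ioi hintgr]
    rw [nsmul_eq_mul, smul_eq_mul, ← mul_assoc, ← hconst]
  exact ⟨hpart1, by rw [hpart1, hmain]⟩
end
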